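/- Assume (B1), (B2), (B3), (B4'), (B5), that the functions c̃_{ij}, d̃_{ij}, p̃_{ij}, Ĩ_i are bounded on [0,∞), that c_{ij}(t)−c̃_{ij}(t) → 0, d_{ij}(t)−d̃_{ij}(t) → 0, p_{ij}(t)−p̃_{ij}(t) → 0 and I_i(t)−Ĩ_i(t) → 0 as t → +∞, and that there exist d₁,…,d_n > 0 such that for each i: d_i·a̲_i·β_i > Σ_{j=1}^{n} ā_j·d_j·(c̃⁺_{ij}·L^f_j + d̃⁺_{ij}·L^g_j + p̃⁺_{ij}·L^h_j), where c̃⁺_{ij} = sup_{t≥0}|c̃_{ij}(t)|, d̃⁺_{ij} = sup_{t≥0}|d̃_{ij}(t)|, p̃⁺_{ij} = sup_{t≥0}|p̃_{ij}(t)|. Then every solution x of (L) with bounded initial condition and every solution x̃ of (L̃) with bounded initial condition satisfy lim_{t→+∞} |x(t) − x̃(t)| = 0 in the max norm. -/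

import Mathlib

open MeasureTheory Filter Set Real

section Aux

lemma abs_slope_frequently {ζ : ℝ → ℝ} {w t B : ℝ} (hζ : HasDerivAt ζ w t)
    (h1 : 0 < ζ t → w ≤ B) (h2 : ζ t < 0 → -w ≤ B) (h3 : ζ t = 0 → |w| ≤ B) :
    ∀ r, B < r → ∃ᶠ z in nhdsWithin t (Set.Ioi t), (z - t)⁻¹ * (|ζ z| - |ζ t|) < r := by
  have hslope : Tendsto (fun z => (z - t)⁻¹ * (ζ z - ζ t)) (nhdsWithin t (Set.Ioi t)) (nhds w) := by
    have h0 := hasDerivAt_iff_tendsto_slope.1 hζ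
    have h' : Tendsto (slope ζ t) (nhdsWithin t (Set.Ioi t)) (nhds w) :=
      h0.mono_left (nhdsWithin_mono t (fun z hz => ne_of_gt hz))
    exact h'.congr (fun z => by rw [slope_def_field, div_eq_inv_mul])
  have key : ∃ D ≤ B, Tendsto (fun z => (z - t)⁻¹ * (|ζ z| - |ζ t|))
      (nhdsWithin t (Set.Ioi t)) (nhds D) := by
    rcases lt_trichotomy (ζ t) 0 with hneg | hzero | hpos
    · refine ⟨-w, h2 hneg, ?_⟩
      have hev : ∀ᶠ z in nhdsWithin t (Set.Ioi t), ζ z < 0 :=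
        eventually_nhdsWithin_of_eventually_nhds
          (ContinuousAt.eventually_lt hζ.continuousAt continuousAt_const hneg)
      refine (hslope.neg.congr' ?_)
      filter_upwards [hev] with z hz
      rw [abs_of_neg hz, abs_of_neg hneg]; ring
    · refine ⟨|w|, h3 hzero, ?_⟩
      refine (hslope.abs.congr' ?_)
      filter_upwards [self_mem_nhdsWithin] with z hz
      have hzt : (0:ℝ) < z - t := sub_pos.2 hz
      rw [hzero, abs_zero, sub_zero, abs_mul, abs_of_pos (inv_pos.2 hzt), sub_zero]
    · refine ⟨w, h1 hpos, ?_⟩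
      have hev : ∀ᶠ z in nhdsWithin t (Set.Ioi t), 0 < ζ z :=
        eventually_nhdsWithin_of_eventually_nhds
          (ContinuousAt.eventually_lt continuousAt_const hζ.continuousAt hpos)
      refine (hslope.congr' ?_)
      filter_upwards [hev] with z hz
      rw [abs_of_pos hz, abs_of_pos hpos]
  rcases key with ⟨D, hDB, hT⟩
  intro r hr
  exact ((hT.eventually_lt_const (lt_of_le_of_lt hDB hr))).frequently

end Aux

lemma gronwall_decay {γ ε δ T t₁ : ℝ} (hγ : 0 < γ) (hδ : 0 ≤ δ) (hε : 0 ≤ ε)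
    {v D : ℝ → ℝ} (hT : T ≤ t₁) (hc : ContinuousOn v (Set.Icc T t₁))
    (hd : ∀ t ∈ Set.Ico T t₁, ∀ r, D t < r →
      ∃ᶠ z in nhdsWithin t (Set.Ioi t), (z - t)⁻¹ * (v z - v t) < r)
    (hD : ∀ t ∈ Set.Ico T t₁, D t ≤ -γ * v t + ε)
    (hvT : v T ≤ δ) :
    v t₁ ≤ δ * Real.exp (-γ * (t₁ - T)) + ε / γ := by
  have key := le_gronwallBound_of_liminf_deriv_right_le (f := v)
    (f' := fun t => -γ * v t + ε) (δ := δ) (K := -γ) (ε := ε) hc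
    (fun x hx r hr => hd x hx r (lt_of_le_of_lt (hD x hx) hr)) hvT
    (fun t _ => le_rfl) t₁ ⟨hT, le_rfl⟩
  have hne : (-γ) ≠ 0 := neg_ne_zero.2 (ne_of_gt hγ)
  rw [gronwallBound_of_K_ne_0 hne] at key
  have key' : v t₁ ≤ δ * Real.exp (-γ * (t₁ - T)) + ε / -γ * (Real.exp (-γ * (t₁ - T)) - 1) := key
  refine key'.trans ?_
  have he1 : Real.exp (-γ * (t₁ - T)) ≤ 1 := by
    rw [Real.exp_le_one_iff]
    exact mul_nonpos_of_nonpos_of_nonneg (neg_nonpos.2 hγ.le) (sub_nonneg.2 hT)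
  have : ε / -γ * (Real.exp (-γ * (t₁ - T)) - 1) = ε / γ * (1 - Real.exp (-γ * (t₁ - T))) := by
    field_simp; ring
  rw [this]
  have h2 : ε / γ * (1 - Real.exp (-γ * (t₁ - T))) ≤ ε / γ * 1 :=
    mul_le_mul_of_nonneg_left (by linarith [Real.exp_pos (-γ * (t₁ - T))])
      (div_nonneg hε hγ.le)
  linarith

noncomputable def phiF (α : ℝ → ℝ) (s : ℝ) : ℝ := ∫ r in (0:ℝ)..s, (α r)⁻¹

section Phi
variable {α : ℝ → ℝ} {l u : ℝ}

lemma phiF_hasDerivAt (hc : Continuous α) (hpos : ∀ r, 0 < α r) (s : ℝ) :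
    HasDerivAt (phiF α) (α s)⁻¹ s :=
  ((hc.inv₀ (fun r => ne_of_gt (hpos r))).integral_hasStrictDerivAt 0 s).hasDerivAt

lemma phiF_cont (hc : Continuous α) (hpos : ∀ r, 0 < α r) : Continuous (phiF α) := by
  have : Differentiable ℝ (phiF α) := fun s => (phiF_hasDerivAt hc hpos s).differentiableAt
  exact this.continuous

lemma phiF_sub_bounds (hc : Continuous α) (hl : 0 < l) (hb : ∀ s, l ≤ α s ∧ α s ≤ u)
    {s r : ℝ} (h : s ≤ r) :
    (r - s) / u ≤ phiF α r - phiF α s ∧ phiF α r - phiF α s ≤ (r - s) / l := by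
  have hu : 0 < u := lt_of_lt_of_le (lt_of_lt_of_le hl (hb 0).1) (hb 0).2
  have hpos : ∀ x, 0 < α x := fun x => lt_of_lt_of_le hl (hb x).1
  have hci : Continuous fun x => (α x)⁻¹ := hc.inv₀ (fun x => ne_of_gt (hpos x))
  have heq : phiF α r - phiF α s = ∫ x in s..r, (α x)⁻¹ := by
    rw [phiF, phiF, ← intervalIntegral.integral_add_adjacent_intervals
      (hci.intervalIntegrable 0 s) (hci.intervalIntegrable s r)]
    ring
  constructor
  · have := intervalIntegral.integral_mono_on h (intervalIntegrable_const (μ := volume) (c := u⁻¹))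
      (hci.intervalIntegrable s r) (fun x _ => by
        exact inv_anti₀ (hpos x) (hb x).2)
    rw [intervalIntegral.integral_const, smul_eq_mul] at this
    rw [heq]; rw [div_eq_mul_inv]; exact this
  · have := intervalIntegral.integral_mono_on h (hci.intervalIntegrable s r)
      (intervalIntegrable_const (μ := volume) (c := l⁻¹)) (fun x _ => by
        exact inv_anti₀ hl (hb x).1)
    rw [intervalIntegral.integral_const, smul_eq_mul] at this
    rw [heq]; rw [div_eq_mul_inv]; exact this

lemma phiF_abs_sub_le (hc : Continuous α) (hl : 0 < l) (hb : ∀ s, l ≤ α s ∧ α s ≤ u)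
    (s r : ℝ) : |phiF α r - phiF α s| ≤ |r - s| / l := by
  have hu : 0 < u := lt_of_lt_of_le (lt_of_lt_of_le hl (hb 0).1) (hb 0).2
  rcases le_total s r with h | h
  · have h1 := (phiF_sub_bounds hc hl hb h).1
    have h2 := (phiF_sub_bounds hc hl hb h).2
    have hge0 : 0 ≤ phiF α r - phiF α s := le_trans (div_nonneg (sub_nonneg.2 h) hu.le) h1
    rw [abs_of_nonneg hge0, abs_of_nonneg (sub_nonneg.2 h)]
    exact h2
  · have h1 := (phiF_sub_bounds hc hl hb h).1
    have h2 := (phiF_sub_bounds hc hl hb h).2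
    have hge0 : 0 ≤ phiF α s - phiF α r := le_trans (div_nonneg (sub_nonneg.2 h) hu.le) h1
    rw [abs_sub_comm, abs_sub_comm r s, abs_of_nonneg hge0, abs_of_nonneg (sub_nonneg.2 h)]
    exact h2

lemma phiF_abs_le (hc : Continuous α) (hl : 0 < l) (hb : ∀ s, l ≤ α s ∧ α s ≤ u)
    (s r : ℝ) : |r - s| ≤ u * |phiF α r - phiF α s| := by
  have hu : 0 < u := lt_of_lt_of_le (lt_of_lt_of_le hl (hb 0).1) (hb 0).2
  rcases le_total s r with h | h
  · have h1 := (phiF_sub_bounds hc hl hb h).1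
    have hφ : 0 ≤ phiF α r - phiF α s := le_trans (div_nonneg (sub_nonneg.2 h) hu.le) h1
    rw [abs_of_nonneg (sub_nonneg.2 h), abs_of_nonneg hφ]
    calc r - s = u * ((r - s)/u) := by field_simp
    _ ≤ u * (phiF α r - phiF α s) := mul_le_mul_of_nonneg_left h1 hu.le
  · have h1 := (phiF_sub_bounds hc hl hb h).1
    have hφ : 0 ≤ phiF α s - phiF α r := le_trans (div_nonneg (sub_nonneg.2 h) hu.le) h1
    rw [abs_of_nonpos (sub_nonpos.2 h), abs_of_nonpos (by linarith : phiF α r - phiF α s ≤ 0)]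
    calc -(r - s) = s - r := by ring
    _ = u * ((s - r)/u) := by field_simp
    _ ≤ u * (phiF α s - phiF α r) := mul_le_mul_of_nonneg_left h1 hu.le
    _ = u * -(phiF α r - phiF α s) := by ring

lemma phiF_zero (α : ℝ → ℝ) : phiF α 0 = 0 := intervalIntegral.integral_same

lemma phiF_pos_iff (hc : Continuous α) (hl : 0 < l) (hb : ∀ s, l ≤ α s ∧ α s ≤ u)
    (s r : ℝ) : 0 < phiF α r - phiF α s ↔ s < r := by
  have hu : 0 < u := lt_of_lt_of_le (lt_of_lt_of_le hl (hb 0).1) (hb 0).2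
  constructor
  · intro h
    by_contra hsr
    push_neg at hsr
    have h1 := (phiF_sub_bounds hc hl hb hsr).1
    have h0 : 0 ≤ (s - r)/u := div_nonneg (sub_nonneg.2 hsr) hu.le
    linarith
  · intro h
    have h1 := (phiF_sub_bounds hc hl hb h.le).1
    have : 0 < (r - s)/u := div_pos (sub_pos.2 h) hu
    linarith

end Phi

lemma kernel_integrable {K : ℝ → ℝ} (hK1 : ∫ u in Set.Ioi (0:ℝ), K u = 1) :
    IntegrableOn K (Set.Ioi 0) volume := by
  by_contra hcon
  rw [MeasureTheory.integral_undef hcon] at hK1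
  exact zero_ne_one hK1

lemma kernel_integral_bound {K : ℝ → ℝ} (hK0 : ∀ u > (0:ℝ), 0 ≤ K u)
    (hK1 : ∫ u in Set.Ioi (0:ℝ), K u = 1)
    {ξ : ℝ → ℝ} {Mb : ℝ} (hξ : ∀ u ∈ Set.Ioi (0:ℝ), |ξ u| ≤ Mb) :
    |∫ u in Set.Ioi (0:ℝ), K u * ξ u| ≤ Mb := by
  have hKint := kernel_integrable hK1
  have h1 : |∫ u in Set.Ioi (0:ℝ), K u * ξ u| ≤ ∫ u in Set.Ioi (0:ℝ), |K u| * |ξ u| := by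
    simpa [Real.norm_eq_abs, abs_mul] using
      norm_integral_le_integral_norm (μ := volume.restrict (Set.Ioi 0)) (f := fun u => K u * ξ u)
  have h2 : ∫ u in Set.Ioi (0:ℝ), |K u| * |ξ u| ≤ ∫ u in Set.Ioi (0:ℝ), K u * Mb := by
    refine integral_mono_of_nonneg (Filter.Eventually.of_forall (fun u => by positivity))
      (hKint.mul_const Mb) ?_
    refine MeasureTheory.ae_restrict_of_forall_mem measurableSet_Ioi (fun u hu => ?_)
    show |K u| * |ξ u| ≤ K u * Mb
    rw [abs_of_nonneg (hK0 u hu)]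
    exact mul_le_mul_of_nonneg_left (hξ u hu) (hK0 u hu)
  have h3 : ∫ u in Set.Ioi (0:ℝ), K u * Mb = Mb := by
    rw [MeasureTheory.integral_mul_const, hK1, one_mul]
  linarith

/-- Right-hand side of the low-order Cohen--Grossberg model (L). -/
noncomputable def Lrhs (n : ℕ) (a b : Fin (n+1) → ℝ → ℝ)
    (c d p : Fin (n+1) → Fin (n+1) → ℝ → ℝ) (Iv : Fin (n+1) → ℝ → ℝ)
    (τ K : Fin (n+1) → Fin (n+1) → ℝ → ℝ) (f g h : Fin (n+1) → ℝ → ℝ)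
    (x : Fin (n+1) → ℝ → ℝ) (i : Fin (n+1)) (t : ℝ) : ℝ :=
  a i (x i t) * (-(b i (x i t))
    + (∑ j : Fin (n+1), c i j t * f j (x j t))
    + (∑ j : Fin (n+1), d i j t * g j (x j (t - τ i j t)))
    + (∑ j : Fin (n+1), p i j t * ∫ u in Set.Ioi (0:ℝ), K i j u * h j (x j (t - u)))
    + Iv i t)

/-- A solution of (L) on `ℝ` with bounded initial condition at `t₀`. -/
def LIsSolution (n : ℕ) (a b : Fin (n+1) → ℝ → ℝ)
    (c d p : Fin (n+1) → Fin (n+1) → ℝ → ℝ) (Iv : Fin (n+1) → ℝ → ℝ)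
    (τ K : Fin (n+1) → Fin (n+1) → ℝ → ℝ) (f g h : Fin (n+1) → ℝ → ℝ)
    (t₀ : ℝ) (x : Fin (n+1) → ℝ → ℝ) : Prop :=
  (∀ i, Continuous (x i)) ∧
  (∃ M, ∀ i, ∀ t ≤ t₀, |x i t| ≤ M) ∧
  (∀ i, ∀ t, t₀ < t → HasDerivAt (x i) (Lrhs n a b c d p Iv τ K f g h x i t) t)

lemma bdd_solution {n : ℕ} (t₀ T : ℝ) (ht₀T : t₀ < T)
    (a b : Fin (n+1) → ℝ → ℝ)
    (c d p : Fin (n+1) → Fin (n+1) → ℝ → ℝ) (Iv : Fin (n+1) → ℝ → ℝ)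
    (τ K : Fin (n+1) → Fin (n+1) → ℝ → ℝ) (f g h : Fin (n+1) → ℝ → ℝ)
    (hac : ∀ i, Continuous (a i))
    (aL aU : Fin (n+1) → ℝ) (haL : ∀ i, 0 < aL i)
    (ha : ∀ i, ∀ u : ℝ, aL i ≤ a i u ∧ a i u ≤ aU i)
    (β : Fin (n+1) → ℝ) (hβ : ∀ i, 0 < β i)
    (hb : ∀ i, ∀ u v : ℝ, u ≠ v → β i ≤ (b i u - b i v) / (u - v))
    (hτ0 : ∀ i j, ∀ t ≥ T, 0 ≤ τ i j t)
    (hK0 : ∀ i j, ∀ u > (0:ℝ), 0 ≤ K i j u)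
    (hK1 : ∀ i j, ∫ u in Set.Ioi (0:ℝ), K i j u = 1)
    (hf0 : ∀ i, f i 0 = 0) (hg0 : ∀ i, g i 0 = 0) (hh0 : ∀ i, h i 0 = 0)
    (Lf Lg Lh : Fin (n+1) → ℝ)
    (hLf : ∀ i, 0 < Lf i) (hLg : ∀ i, 0 < Lg i) (hLh : ∀ i, 0 < Lh i)
    (hfl : ∀ i, ∀ u v : ℝ, |f i u - f i v| ≤ Lf i * |u - v|)
    (hgl : ∀ i, ∀ u v : ℝ, |g i u - g i v| ≤ Lg i * |u - v|)
    (hhl : ∀ i, ∀ u v : ℝ, |h i u - h i v| ≤ Lh i * |u - v|)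
    (C D P : Fin (n+1) → Fin (n+1) → ℝ) (IC : Fin (n+1) → ℝ)
    (hC : ∀ i j, ∀ t ≥ T, |c i j t| ≤ C i j)
    (hD : ∀ i j, ∀ t ≥ T, |d i j t| ≤ D i j)
    (hP : ∀ i j, ∀ t ≥ T, |p i j t| ≤ P i j)
    (hI : ∀ i, ∀ t ≥ T, |Iv i t| ≤ IC i)
    (dv : Fin (n+1) → ℝ) (hdv : ∀ i, 0 < dv i)
    (hdom : ∀ i, (∑ j, aU j * dv j * (C i j * Lf j + D i j * Lg j + P i j * Lh j))
        < dv i * aL i * β i)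
    (x : Fin (n+1) → ℝ → ℝ)
    (hx : LIsSolution n a b c d p Iv τ K f g h t₀ x) :
    ∃ B, ∀ i, ∀ t, |x i t| ≤ B := by
  classical
  obtain ⟨hxc, ⟨M₀, hM₀⟩, hxd⟩ := hx
  have hapos : ∀ i u, 0 < a i u := fun i u => lt_of_lt_of_le (haL i) (ha i u).1
  have haU : ∀ i, 0 < aU i := fun i => lt_of_lt_of_le (hapos i 0) (ha i 0).2
  -- the transformed functions
  set w : Fin (n+1) → ℝ → ℝ := fun i t => phiF (a i) (x i t) with hw
  set v : Fin (n+1) → ℝ → ℝ := fun i t => |w i t| with hv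
  have hwc : ∀ i, Continuous (w i) := fun i => (phiF_cont (hac i) (hapos i)).comp (hxc i)
  have hvx : ∀ i t, v i t ≤ |x i t| / aL i := by
    intro i t
    have := phiF_abs_sub_le (hac i) (haL i) (ha i) 0 (x i t)
    simpa [hv, hw, phiF_zero] using this
  have hxv : ∀ i t, |x i t| ≤ aU i * v i t := by
    intro i t
    have := phiF_abs_le (hac i) (haL i) (ha i) 0 (x i t)
    simpa [hv, hw, phiF_zero] using this
  -- constants
  set γ : Fin (n+1) → ℝ := fun i => aL i * β i with hγ
  have hγpos : ∀ i, 0 < γ i := fun i => mul_pos (haL i) (hβ i)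
  set Γ : Fin (n+1) → ℝ :=
    fun i => ∑ j, aU j * dv j * (C i j * Lf j + D i j * Lg j + P i j * Lh j) with hΓ
  have hC0 : ∀ i j, 0 ≤ C i j := fun i j => le_trans (abs_nonneg _) (hC i j T le_rfl)
  have hD0 : ∀ i j, 0 ≤ D i j := fun i j => le_trans (abs_nonneg _) (hD i j T le_rfl)
  have hP0 : ∀ i j, 0 ≤ P i j := fun i j => le_trans (abs_nonneg _) (hP i j T le_rfl)
  have hIC0 : ∀ i, 0 ≤ IC i := fun i => le_trans (abs_nonneg _) (hI i T le_rfl)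
  have hΓ0 : ∀ i, 0 ≤ Γ i := by
    intro i
    apply Finset.sum_nonneg
    intro j _
    have := (hLf j).le; have := (hLg j).le; have := (hLh j).le
    have := hC0 i j; have := hD0 i j; have := hP0 i j
    have := (haU j).le; have := (hdv j).le
    positivity
  set κ : Fin (n+1) → ℝ := fun i => |b i 0| + IC i with hκ
  have hκ0 : ∀ i, 0 ≤ κ i := fun i => add_nonneg (abs_nonneg _) (hIC0 i)
  set q : ℝ := Finset.univ.sup' Finset.univ_nonempty (fun i => Γ i / (γ i * dv i)) with hq
  have hq1 : q < 1 := by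
    rw [hq, Finset.sup'_lt_iff]
    intro i _
    rw [div_lt_one (mul_pos (hγpos i) (hdv i))]
    calc Γ i < dv i * aL i * β i := hdom i
    _ = γ i * dv i := by rw [hγ]; ring
  have hqi : ∀ i, Γ i / (γ i * dv i) ≤ q := by
    intro i; rw [hq]
    exact Finset.le_sup' (f := fun i => Γ i / (γ i * dv i)) (Finset.mem_univ i)
  have hq0 : 0 ≤ q := le_trans (div_nonneg (hΓ0 0) (mul_pos (hγpos 0) (hdv 0)).le) (hqi 0)
  set κ' : ℝ := Finset.univ.sup' Finset.univ_nonempty (fun i => κ i / (γ i * dv i)) with hκ'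
  have hκ'i : ∀ i, κ i / (γ i * dv i) ≤ κ' := by
    intro i; rw [hκ']
    exact Finset.le_sup' (f := fun i => κ i / (γ i * dv i)) (Finset.mem_univ i)
  have hκ'0 : 0 ≤ κ' :=
    le_trans (div_nonneg (hκ0 0) (mul_pos (hγpos 0) (hdv 0)).le) (hκ'i 0)
  -- running sup
  have hIicBound : ∀ t, ∃ M, ∀ j, ∀ s ≤ t, |x j s| ≤ M := by
    intro t
    rcases le_or_gt t t₀ with htt | htt
    · exact ⟨M₀, fun j s hs => hM₀ j s (hs.trans htt)⟩
    · have hcomp : ∀ j : Fin (n+1), ∃ Mc, ∀ s ∈ Set.Icc t₀ t, |x j s| ≤ Mc := by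
        intro j
        obtain ⟨Mc, hMc⟩ := (isCompact_Icc (a := t₀) (b := t)).exists_bound_of_continuousOn
          ((hxc j).continuousOn)
        exact ⟨Mc, fun s hs => by simpa [Real.norm_eq_abs] using hMc s hs⟩
      choose Mc hMc using hcomp
      refine ⟨max M₀ (Finset.univ.sup' Finset.univ_nonempty Mc), fun j s hs => ?_⟩
      rcases le_or_gt s t₀ with hst | hst
      · exact le_trans (hM₀ j s hst) (le_max_left _ _)
      · exact le_trans (le_trans (hMc j s ⟨hst.le, hs⟩)
          (Finset.le_sup' _ (Finset.mem_univ j))) (le_max_right _ _)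
  have hbdd : ∀ j (t : ℝ), BddAbove ((fun s => v j s / dv j) '' Set.Iic t) := by
    intro j t
    obtain ⟨M, hM⟩ := hIicBound t
    refine ⟨M / aL j / dv j, ?_⟩
    rintro y ⟨s, hs, rfl⟩
    have h1 : v j s ≤ M / aL j := le_trans (hvx j s)
      ((div_le_div_iff_of_pos_right (haL j)).2 (hM j s hs))
    exact (div_le_div_iff_of_pos_right (hdv j)).2 h1
  set V : ℝ → ℝ := fun t =>
    Finset.univ.sup' Finset.univ_nonempty
      (fun j => sSup ((fun s => v j s / dv j) '' Set.Iic t)) with hV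
  have hVmem : ∀ j (t s : ℝ), s ≤ t → v j s / dv j ≤ V t := by
    intro j t s hs
    refine le_trans (le_csSup (hbdd j t) ⟨s, hs, rfl⟩) ?_
    exact Finset.le_sup' (f := fun j => sSup ((fun s => v j s / dv j) '' Set.Iic t))
      (Finset.mem_univ j)
  have hV0 : ∀ t, 0 ≤ V t := by
    intro t
    exact le_trans (div_nonneg (abs_nonneg _) (hdv 0).le) (hVmem 0 t t le_rfl)
  have hVmono : ∀ s t : ℝ, s ≤ t → V s ≤ V t := by
    intro s t hst
    apply Finset.sup'_le
    intro j _
    refine csSup_le ⟨v j s / dv j, ⟨s, Set.mem_Iic.2 le_rfl, rfl⟩⟩ ?_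
    rintro y ⟨s', hs', rfl⟩
    exact hVmem j t s' (hs'.trans hst)
  -- size bounds for the nonlinearities
  have hfx : ∀ j (s t₁ : ℝ), s ≤ t₁ → |f j (x j s)| ≤ Lf j * (aU j * (dv j * V t₁)) := by
    intro j s t₁ hst
    have h1 : |f j (x j s)| ≤ Lf j * |x j s| := by
      simpa [hf0 j] using hfl j (x j s) 0
    have h2 : |x j s| ≤ aU j * (dv j * V t₁) := by
      refine le_trans (hxv j s) (mul_le_mul_of_nonneg_left ?_ (haU j).le)
      have := hVmem j t₁ s hst
      rw [div_le_iff₀ (hdv j)] at this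
      linarith [this]
    exact le_trans h1 (mul_le_mul_of_nonneg_left h2 (hLf j).le)
  have hgx : ∀ j (s t₁ : ℝ), s ≤ t₁ → |g j (x j s)| ≤ Lg j * (aU j * (dv j * V t₁)) := by
    intro j s t₁ hst
    have h1 : |g j (x j s)| ≤ Lg j * |x j s| := by
      simpa [hg0 j] using hgl j (x j s) 0
    have h2 : |x j s| ≤ aU j * (dv j * V t₁) := by
      refine le_trans (hxv j s) (mul_le_mul_of_nonneg_left ?_ (haU j).le)
      have := hVmem j t₁ s hst
      rw [div_le_iff₀ (hdv j)] at this
      linarith [this]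
    exact le_trans h1 (mul_le_mul_of_nonneg_left h2 (hLg j).le)
  have hhx : ∀ j (s t₁ : ℝ), s ≤ t₁ → |h j (x j s)| ≤ Lh j * (aU j * (dv j * V t₁)) := by
    intro j s t₁ hst
    have h1 : |h j (x j s)| ≤ Lh j * |x j s| := by
      simpa [hh0 j] using hhl j (x j s) 0
    have h2 : |x j s| ≤ aU j * (dv j * V t₁) := by
      refine le_trans (hxv j s) (mul_le_mul_of_nonneg_left ?_ (haU j).le)
      have := hVmem j t₁ s hst
      rw [div_le_iff₀ (hdv j)] at this
      linarith [this]
    exact le_trans h1 (mul_le_mul_of_nonneg_left h2 (hLh j).le)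
  -- the coupling estimate
  have hR : ∀ i (s t₁ : ℝ), T ≤ s → s ≤ t₁ →
      |(∑ j, c i j s * f j (x j s)) + (∑ j, d i j s * g j (x j (s - τ i j s)))
        + (∑ j, p i j s * ∫ u in Set.Ioi (0:ℝ), K i j u * h j (x j (s - u))) + Iv i s|
      ≤ Γ i * V t₁ + IC i := by
    intro i s t₁ hTs hst
    have hA1 : |∑ j, c i j s * f j (x j s)|
        ≤ ∑ j, C i j * (Lf j * (aU j * (dv j * V t₁))) := by
      refine le_trans (Finset.abs_sum_le_sum_abs _ _) (Finset.sum_le_sum (fun j _ => ?_))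
      rw [abs_mul]
      exact mul_le_mul (hC i j s hTs) (hfx j s t₁ hst) (abs_nonneg _) (hC0 i j)
    have hA2 : |∑ j, d i j s * g j (x j (s - τ i j s))|
        ≤ ∑ j, D i j * (Lg j * (aU j * (dv j * V t₁))) := by
      refine le_trans (Finset.abs_sum_le_sum_abs _ _) (Finset.sum_le_sum (fun j _ => ?_))
      rw [abs_mul]
      have hdel : s - τ i j s ≤ t₁ := by
        have := hτ0 i j s hTs
        linarith
      exact mul_le_mul (hD i j s hTs) (hgx j _ t₁ hdel) (abs_nonneg _) (hD0 i j)
    have hA3 : |∑ j, p i j s * ∫ u in Set.Ioi (0:ℝ), K i j u * h j (x j (s - u))|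
        ≤ ∑ j, P i j * (Lh j * (aU j * (dv j * V t₁))) := by
      refine le_trans (Finset.abs_sum_le_sum_abs _ _) (Finset.sum_le_sum (fun j _ => ?_))
      rw [abs_mul]
      refine mul_le_mul (hP i j s hTs) ?_ (abs_nonneg _) (hP0 i j)
      refine kernel_integral_bound (hK0 i j) (hK1 i j) (fun u hu => ?_)
      have hdel : s - u ≤ t₁ := by
        have : (0:ℝ) < u := hu
        linarith
      exact hhx j _ t₁ hdel
    have hA4 : |Iv i s| ≤ IC i := hI i s hTs
    have hsum : (∑ j, C i j * (Lf j * (aU j * (dv j * V t₁))))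
        + (∑ j, D i j * (Lg j * (aU j * (dv j * V t₁))))
        + (∑ j, P i j * (Lh j * (aU j * (dv j * V t₁)))) = Γ i * V t₁ := by
      rw [hΓ, Finset.sum_mul, ← Finset.sum_add_distrib, ← Finset.sum_add_distrib]
      exact Finset.sum_congr rfl (fun j _ => by ring)
    calc |(∑ j, c i j s * f j (x j s)) + (∑ j, d i j s * g j (x j (s - τ i j s)))
        + (∑ j, p i j s * ∫ u in Set.Ioi (0:ℝ), K i j u * h j (x j (s - u))) + Iv i s|
        ≤ |∑ j, c i j s * f j (x j s)| + |∑ j, d i j s * g j (x j (s - τ i j s))|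
          + |∑ j, p i j s * ∫ u in Set.Ioi (0:ℝ), K i j u * h j (x j (s - u))| + |Iv i s| := by
          exact le_trans (abs_add_le _ _) (add_le_add (le_trans (abs_add_le _ _)
            (add_le_add (abs_add_le _ _) le_rfl)) le_rfl)
    _ ≤ Γ i * V t₁ + IC i := by
          rw [← hsum]
          linarith [hA1, hA2, hA3, hA4]
  -- derivative of the transformed components
  have hwd : ∀ i (r : ℝ), t₀ < r → HasDerivAt (w i)
      (-(b i (x i r)) + ((∑ j, c i j r * f j (x j r)) + (∑ j, d i j r * g j (x j (r - τ i j r)))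
        + (∑ j, p i j r * ∫ u in Set.Ioi (0:ℝ), K i j u * h j (x j (r - u))) + Iv i r)) r := by
    intro i r hr
    have hx' := hxd i r hr
    have hphi := phiF_hasDerivAt (hac i) (hapos i) (x i r)
    have hcomp := HasDerivAt.comp r hphi hx'
    have hane : a i (x i r) ≠ 0 := ne_of_gt (hapos i (x i r))
    have heq : (a i (x i r))⁻¹ * Lrhs n a b c d p Iv τ K f g h x i r
        = -(b i (x i r)) + ((∑ j, c i j r * f j (x j r))
          + (∑ j, d i j r * g j (x j (r - τ i j r)))
          + (∑ j, p i j r * ∫ u in Set.Ioi (0:ℝ), K i j u * h j (x j (r - u))) + Iv i r) := by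
      simp only [Lrhs]
      rw [inv_mul_cancel_left₀ hane]
      ring
    rw [heq] at hcomp
    exact hcomp
  -- Grönwall estimate on [T, t₁]
  have hvineq : ∀ i (t₁ : ℝ), T ≤ t₁ → ∀ s, T ≤ s → s ≤ t₁ →
      v i s ≤ dv i * V T + (Γ i * V t₁ + κ i) / γ i := by
    intro i t₁ ht₁ s hTs hst
    have hε0 : 0 ≤ Γ i * V t₁ + κ i := add_nonneg (mul_nonneg (hΓ0 i) (hV0 t₁)) (hκ0 i)
    have hδ0 : 0 ≤ dv i * V T := mul_nonneg (hdv i).le (hV0 T)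
    have key := gronwall_decay (γ := γ i) (ε := Γ i * V t₁ + κ i) (δ := dv i * V T)
      (T := T) (t₁ := s) (v := v i)
      (D := fun r => -γ i * v i r + (Γ i * V t₁ + κ i))
      (hγpos i) hδ0 hε0 hTs ((hwc i).abs.continuousOn) ?_ (fun r _ => le_rfl) ?_
    · refine key.trans ?_
      have hexp : Real.exp (-γ i * (s - T)) ≤ 1 := by
        rw [Real.exp_le_one_iff]
        exact mul_nonpos_of_nonpos_of_nonneg (neg_nonpos.2 (hγpos i).le) (sub_nonneg.2 hTs)
      have h5 := mul_le_mul_of_nonneg_left hexp hδ0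
      linarith
    · -- the Dini condition
      intro r hr
      have hrt₀ : t₀ < r := lt_of_lt_of_le ht₀T hr.1
      have hwd' := hwd i r hrt₀
      have hRb : |(∑ j, c i j r * f j (x j r)) + (∑ j, d i j r * g j (x j (r - τ i j r)))
          + (∑ j, p i j r * ∫ u in Set.Ioi (0:ℝ), K i j u * h j (x j (r - u))) + Iv i r|
          ≤ Γ i * V t₁ + IC i := hR i r t₁ hr.1 (le_trans hr.2.le hst)
      set R := (∑ j, c i j r * f j (x j r)) + (∑ j, d i j r * g j (x j (r - τ i j r)))
        + (∑ j, p i j r * ∫ u in Set.Ioi (0:ℝ), K i j u * h j (x j (r - u))) + Iv i r with hRdef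
      have hκeq : κ i = |b i 0| + IC i := rfl
      have hγeq : γ i = aL i * β i := rfl
      refine abs_slope_frequently hwd' ?_ ?_ ?_
      · intro hpos
        show -(b i (x i r)) + R ≤ -γ i * v i r + (Γ i * V t₁ + κ i)
        have hx0 : 0 < x i r := by
          refine (phiF_pos_iff (hac i) (haL i) (ha i) 0 (x i r)).1 ?_
          rw [phiF_zero]
          simpa using hpos
        have hbb : β i * x i r ≤ b i (x i r) - b i 0 := by
          have hble := hb i (x i r) 0 (ne_of_gt hx0)
          rw [sub_zero] at hble
          exact (le_div_iff₀ hx0).1 hble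
        have hvr : aL i * v i r ≤ x i r := by
          have hv1 := hvx i r
          rw [abs_of_pos hx0, le_div_iff₀ (haL i)] at hv1
          linarith
        have hmul : β i * (aL i * v i r) ≤ β i * x i r :=
          mul_le_mul_of_nonneg_left hvr (hβ i).le
        have hmul2 : β i * (aL i * v i r) = γ i * v i r := by rw [hγeq]; ring
        have hR1 : R ≤ Γ i * V t₁ + IC i := le_trans (le_abs_self R) hRb
        have hb0 : -(b i 0) ≤ |b i 0| := neg_le_abs _
        rw [hκeq]
        linarith
      · intro hneg
        show -(-(b i (x i r)) + R) ≤ -γ i * v i r + (Γ i * V t₁ + κ i)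
        have hx0 : x i r < 0 := by
          have hiff := (phiF_pos_iff (hac i) (haL i) (ha i) (x i r) 0).1 (by
            rw [phiF_zero]
            simpa using hneg)
          linarith
        have hbb : β i * (0 - x i r) ≤ b i 0 - b i (x i r) := by
          have hble := hb i 0 (x i r) (ne_of_gt hx0)
          have hpos0 : (0:ℝ) < 0 - x i r := by linarith
          exact (le_div_iff₀ hpos0).1 hble
        have hvr : aL i * v i r ≤ -(x i r) := by
          have hv1 := hvx i r
          rw [abs_of_neg hx0, le_div_iff₀ (haL i)] at hv1
          linarith
        have hmul : β i * (aL i * v i r) ≤ β i * (0 - x i r) := by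
          refine mul_le_mul_of_nonneg_left ?_ (hβ i).le
          linarith
        have hmul2 : β i * (aL i * v i r) = γ i * v i r := by rw [hγeq]; ring
        have hR1 : -R ≤ Γ i * V t₁ + IC i := le_trans (neg_le_abs R) hRb
        have hb0 : b i 0 ≤ |b i 0| := le_abs_self _
        rw [hκeq]
        linarith
      · intro hzero
        show |(-(b i (x i r)) + R)| ≤ -γ i * v i r + (Γ i * V t₁ + κ i)
        have hx0 : x i r = 0 := by
          have h1 := hxv i r
          have hveq : v i r = 0 := by simp [hv, hzero]
          rw [hveq, mul_zero] at h1
          exact abs_eq_zero.1 (le_antisymm h1 (abs_nonneg _))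
        have hveq : v i r = 0 := by simp [hv, hzero]
        have habs : |(-(b i (x i r)) + R)| ≤ |b i 0| + |R| := by
          rw [hx0]
          calc |(-(b i 0) + R)| ≤ |(-(b i 0))| + |R| := abs_add_le _ _
          _ = |b i 0| + |R| := by rw [abs_neg]
        rw [hκeq, hveq]
        have : |R| ≤ Γ i * V t₁ + IC i := hRb
        linarith
    · -- initial bound
      have h1 := hVmem i T T le_rfl
      rw [div_le_iff₀ (hdv i)] at h1
      linarith
  -- the self-improving bound
  have hVbound : ∀ t₁, T ≤ t₁ → V t₁ ≤ V T + q * V t₁ + κ' := by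
    intro t₁ ht₁
    rw [hV]
    apply Finset.sup'_le
    intro j _
    refine csSup_le ⟨v j t₁ / dv j, ⟨t₁, Set.mem_Iic.2 le_rfl, rfl⟩⟩ ?_
    rintro y ⟨s, hs, rfl⟩
    rcases le_total s T with hsT | hsT
    · have h1 : v j s / dv j ≤ V T := hVmem j T s hsT
      have h2 : 0 ≤ q * V t₁ := mul_nonneg hq0 (hV0 t₁)
      linarith
    · have h1 := hvineq j t₁ ht₁ s hsT (Set.mem_Iic.1 hs)
      have hdvj := hdv j
      have hγj := hγpos j
      rw [div_le_iff₀ hdvj]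
      have hq' : Γ j * V t₁ ≤ q * (γ j * dv j) * V t₁ := by
        have h2 := hqi j
        rw [div_le_iff₀ (mul_pos hγj hdvj)] at h2
        exact mul_le_mul_of_nonneg_right h2 (hV0 t₁)
      have hκ'' : κ j ≤ κ' * (γ j * dv j) := by
        have h2 := hκ'i j
        rwa [div_le_iff₀ (mul_pos hγj hdvj)] at h2
      have hdivle : (Γ j * V t₁ + κ j) / γ j ≤ (q * V t₁ + κ') * dv j := by
        rw [div_le_iff₀ hγj]
        nlinarith [hq', hκ'']
      nlinarith [h1, hdivle]
  have hden : 0 < 1 - q := by linarith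
  have hVfin : ∀ t, V t ≤ (V T + κ') / (1 - q) := by
    intro t
    rcases le_total t T with htT | htT
    · refine (hVmono t T htT).trans ?_
      rw [le_div_iff₀ hden]
      nlinarith [hV0 T, hκ'0, hq0, mul_nonneg hq0 (hV0 T)]
    · have h1 := hVbound t htT
      rw [le_div_iff₀ hden]
      nlinarith [h1]
  refine ⟨(Finset.univ.sup' Finset.univ_nonempty (fun i => aU i * dv i)) * ((V T + κ') / (1 - q)),
    fun i t => ?_⟩
  have h1 : |x i t| ≤ aU i * (dv i * V t) := by
    refine le_trans (hxv i t) (mul_le_mul_of_nonneg_left ?_ (haU i).le)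
    have h2 := hVmem i t t le_rfl
    rw [div_le_iff₀ (hdv i)] at h2
    linarith
  have h2 : V t ≤ (V T + κ') / (1 - q) := hVfin t
  have h3 : aU i * dv i ≤ Finset.univ.sup' Finset.univ_nonempty (fun i => aU i * dv i) :=
    Finset.le_sup' (f := fun i => aU i * dv i) (Finset.mem_univ i)
  have h4 : 0 ≤ (V T + κ') / (1 - q) := div_nonneg (add_nonneg (hV0 T) hκ'0) hden.le
  nlinarith [h1, h2, h3, h4, mul_pos (haU i) (hdv i), hV0 t]

lemma kernel_tail_tendsto {K : ℝ → ℝ} (hK1 : ∫ u in Set.Ioi (0:ℝ), K u = 1) :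
    Tendsto (fun S => ∫ u in Set.Ioi S, K u) atTop (nhds 0) := by
  have hKint := kernel_integrable hK1
  have h1 : Tendsto (fun b => ∫ u in (0:ℝ)..b, K u) atTop (nhds 1) := by
    have := MeasureTheory.intervalIntegral_tendsto_integral_Ioi 0 hKint tendsto_id
    rwa [hK1] at this
  have h2 : ∀ᶠ b in atTop, (1:ℝ) - ∫ u in (0:ℝ)..b, K u = ∫ u in Set.Ioi b, K u := by
    filter_upwards [eventually_ge_atTop (0:ℝ)] with b hb
    rw [intervalIntegral.integral_of_le hb]
    have hsplit : ∫ u in Set.Ioi (0:ℝ), K u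
        = (∫ u in Set.Ioc 0 b, K u) + ∫ u in Set.Ioi b, K u := by
      rw [← MeasureTheory.setIntegral_union (Set.Ioc_disjoint_Ioi le_rfl) measurableSet_Ioi
        (hKint.mono_set Set.Ioc_subset_Ioi_self) (hKint.mono_set (Set.Ioi_subset_Ioi hb)),
        Set.Ioc_union_Ioi_eq_Ioi hb]
    rw [hK1] at hsplit
    linarith
  have h3 : Tendsto (fun b => (1:ℝ) - ∫ u in (0:ℝ)..b, K u) atTop (nhds 0) := by
    have := tendsto_const_nhds (x := (1:ℝ)) (f := atTop (α := ℝ)) |>.sub h1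
    simpa using this
  exact h3.congr' h2

lemma kernel_split_bound {K : ℝ → ℝ} (hK0 : ∀ u > (0:ℝ), 0 ≤ K u)
    (hK1 : ∫ u in Set.Ioi (0:ℝ), K u = 1)
    (hKm : AEStronglyMeasurable K (volume.restrict (Set.Ioi 0)))
    {ξ : ℝ → ℝ} {S c1 c2 εt : ℝ} (hS : 0 < S) (hc1 : 0 ≤ c1) (hc2 : 0 ≤ c2)
    (htail : ∫ u in Set.Ioi S, K u ≤ εt)
    (hξ1 : ∀ u ∈ Set.Ioc (0:ℝ) S, |ξ u| ≤ c1) (hξ2 : ∀ u ∈ Set.Ioi S, |ξ u| ≤ c2) :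
    |∫ u in Set.Ioi (0:ℝ), K u * ξ u| ≤ c1 + c2 * εt := by
  have hKint := kernel_integrable hK1
  set pc : ℝ → ℝ := fun u => Set.piecewise (Set.Iic S) (fun _ => c1) (fun _ => c2) u with hpc
  have hpcb : ∀ u, |pc u| ≤ max c1 c2 := by
    intro u
    rcases le_or_gt u S with hu | hu
    · rw [hpc]; simp only [Set.piecewise_eq_of_mem _ _ _ (Set.mem_Iic.2 hu)]
      rw [abs_of_nonneg hc1]; exact le_max_left _ _
    · rw [hpc]; simp only [Set.piecewise_eq_of_notMem _ _ _ (Set.notMem_Iic.2 hu)]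
      rw [abs_of_nonneg hc2]; exact le_max_right _ _
  have hpcm : Measurable pc := measurable_const.piecewise measurableSet_Iic measurable_const
  have hGm : AEStronglyMeasurable (fun u => K u * pc u) (volume.restrict (Set.Ioi 0)) :=
    hKm.mul (hpcm.aestronglyMeasurable.restrict)
  have hGint : IntegrableOn (fun u => K u * pc u) (Set.Ioi 0) volume := by
    refine Integrable.mono' (hKint.mul_const (max c1 c2)) hGm ?_
    refine MeasureTheory.ae_restrict_of_forall_mem measurableSet_Ioi (fun u hu => ?_)
    rw [Real.norm_eq_abs, abs_mul, abs_of_nonneg (hK0 u hu)]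
    exact mul_le_mul_of_nonneg_left (hpcb u) (hK0 u hu)
  have step1 : |∫ u in Set.Ioi (0:ℝ), K u * ξ u| ≤ ∫ u in Set.Ioi (0:ℝ), K u * pc u := by
    have h1 : |∫ u in Set.Ioi (0:ℝ), K u * ξ u| ≤ ∫ u in Set.Ioi (0:ℝ), |K u| * |ξ u| := by
      simpa [Real.norm_eq_abs, abs_mul] using
        norm_integral_le_integral_norm (μ := volume.restrict (Set.Ioi 0))
          (f := fun u => K u * ξ u)
    refine h1.trans (integral_mono_of_nonneg
      (Filter.Eventually.of_forall (fun u => by positivity)) hGint ?_)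
    refine MeasureTheory.ae_restrict_of_forall_mem measurableSet_Ioi (fun u hu => ?_)
    show |K u| * |ξ u| ≤ K u * pc u
    rw [abs_of_nonneg (hK0 u hu)]
    refine mul_le_mul_of_nonneg_left ?_ (hK0 u hu)
    rcases le_or_gt u S with huS | huS
    · rw [hpc]; simp only [Set.piecewise_eq_of_mem _ _ _ (Set.mem_Iic.2 huS)]
      exact hξ1 u ⟨hu, huS⟩
    · rw [hpc]; simp only [Set.piecewise_eq_of_notMem _ _ _ (Set.notMem_Iic.2 huS)]
      exact hξ2 u huS
  have step2 : ∫ u in Set.Ioi (0:ℝ), K u * pc u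
      = (∫ u in Set.Ioc 0 S, K u * pc u) + ∫ u in Set.Ioi S, K u * pc u := by
    rw [← MeasureTheory.setIntegral_union (Set.Ioc_disjoint_Ioi le_rfl) measurableSet_Ioi
      (hGint.mono_set Set.Ioc_subset_Ioi_self) (hGint.mono_set (Set.Ioi_subset_Ioi hS.le)),
      Set.Ioc_union_Ioi_eq_Ioi hS.le]
  have step3 : ∫ u in Set.Ioc (0:ℝ) S, K u * pc u ≤ c1 := by
    have he : ∫ u in Set.Ioc (0:ℝ) S, K u * pc u = ∫ u in Set.Ioc (0:ℝ) S, K u * c1 := by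
      refine MeasureTheory.setIntegral_congr_fun measurableSet_Ioc (fun u hu => ?_)
      rw [hpc]; simp only [Set.piecewise_eq_of_mem _ _ _ (Set.mem_Iic.2 hu.2)]
    rw [he, MeasureTheory.integral_mul_const]
    have hle1 : ∫ u in Set.Ioc (0:ℝ) S, K u ≤ 1 := by
      rw [← hK1]
      refine MeasureTheory.setIntegral_mono_set hKint ?_
        (HasSubset.Subset.eventuallyLE Set.Ioc_subset_Ioi_self)
      exact MeasureTheory.ae_restrict_of_forall_mem measurableSet_Ioi (fun u hu => hK0 u hu)
    calc (∫ u in Set.Ioc (0:ℝ) S, K u) * c1 ≤ 1 * c1 :=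
      mul_le_mul_of_nonneg_right hle1 hc1
    _ = c1 := one_mul c1
  have step4 : ∫ u in Set.Ioi S, K u * pc u ≤ c2 * εt := by
    have he : ∫ u in Set.Ioi S, K u * pc u = ∫ u in Set.Ioi S, K u * c2 := by
      refine MeasureTheory.setIntegral_congr_fun measurableSet_Ioi (fun u hu => ?_)
      rw [hpc]
      simp only [Set.piecewise_eq_of_notMem _ _ _ (Set.notMem_Iic.2 (Set.mem_Ioi.1 hu))]
    rw [he, MeasureTheory.integral_mul_const]
    calc (∫ u in Set.Ioi S, K u) * c2 ≤ εt * c2 := mul_le_mul_of_nonneg_right htail hc2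
    _ = c2 * εt := mul_comm _ _
  linarith

set_option maxHeartbeats 2000000 in
/-- Theorem 4.8: convergence of the solutions of (L) to the solutions of the
asymptotic system (L̃). -/
theorem L_convergence_to_asymptotic {n : ℕ} (t₀ : ℝ) (ht₀ : 0 ≤ t₀)
    (a b : Fin (n+1) → ℝ → ℝ)
    (c d p : Fin (n+1) → Fin (n+1) → ℝ → ℝ) (Iv : Fin (n+1) → ℝ → ℝ)
    (τ K : Fin (n+1) → Fin (n+1) → ℝ → ℝ) (f g h : Fin (n+1) → ℝ → ℝ)
    -- continuity of the data
    (hac : ∀ i, Continuous (a i)) (hapos : ∀ i, ∀ u : ℝ, 0 < a i u)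
    (hbc : ∀ i, Continuous (b i))
    (hcc : ∀ i j, ContinuousOn (c i j) (Set.Ici 0))
    (hdc : ∀ i j, ContinuousOn (d i j) (Set.Ici 0))
    (hpc : ∀ i j, ContinuousOn (p i j) (Set.Ici 0))
    (hIc : ∀ i, ContinuousOn (Iv i) (Set.Ici 0))
    (hτc : ∀ i j, ContinuousOn (τ i j) (Set.Ici 0))
    (hτ0 : ∀ i j, ∀ t ≥ (0:ℝ), 0 ≤ τ i j t)
    (hKc : ∀ i j, ContinuousOn (K i j) (Set.Ici 0))
    (hK0 : ∀ i j, ∀ u ≥ (0:ℝ), 0 ≤ K i j u)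
    (hfc : ∀ j, Continuous (f j)) (hgc : ∀ j, Continuous (g j)) (hhc : ∀ j, Continuous (h j))
    -- (B1)
    (hK1 : ∀ i j, ∫ u in Set.Ioi (0:ℝ), K i j u = 1)
    -- (B2)
    (aL aU : Fin (n+1) → ℝ) (haL : ∀ i, 0 < aL i)
    (ha : ∀ i, ∀ u : ℝ, aL i ≤ a i u ∧ a i u ≤ aU i)
    -- (B3)
    (β : Fin (n+1) → ℝ) (hβ : ∀ i, 0 < β i)
    (hb : ∀ i, ∀ u v : ℝ, u ≠ v → β i ≤ (b i u - b i v) / (u - v))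
    -- (B4')
    (hτbd : ∀ i j, ∃ M, ∀ t ≥ (0:ℝ), τ i j t ≤ M)
    -- (B5)
    (hf0 : ∀ i, f i 0 = 0) (hg0 : ∀ i, g i 0 = 0) (hh0 : ∀ i, h i 0 = 0)
    (Lf Lg Lh : Fin (n+1) → ℝ) (hLf : ∀ i, 0 < Lf i) (hLg : ∀ i, 0 < Lg i) (hLh : ∀ i, 0 < Lh i)
    (hfl : ∀ i, ∀ u v : ℝ, |f i u - f i v| ≤ Lf i * |u - v|)
    (hgl : ∀ i, ∀ u v : ℝ, |g i u - g i v| ≤ Lg i * |u - v|)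
    (hhl : ∀ i, ∀ u v : ℝ, |h i u - h i v| ≤ Lh i * |u - v|)
    -- the asymptotic coefficients
    (ct dt pt : Fin (n+1) → Fin (n+1) → ℝ → ℝ) (It : Fin (n+1) → ℝ → ℝ)
    (hctc : ∀ i j, ContinuousOn (ct i j) (Set.Ici 0))
    (hdtc : ∀ i j, ContinuousOn (dt i j) (Set.Ici 0))
    (hptc : ∀ i j, ContinuousOn (pt i j) (Set.Ici 0))
    (hItc : ∀ i, ContinuousOn (It i) (Set.Ici 0))
    (hctbd : ∀ i j, ∃ M, ∀ t ≥ (0:ℝ), |ct i j t| ≤ M)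
    (hdtbd : ∀ i j, ∃ M, ∀ t ≥ (0:ℝ), |dt i j t| ≤ M)
    (hptbd : ∀ i j, ∃ M, ∀ t ≥ (0:ℝ), |pt i j t| ≤ M)
    (hItbd : ∀ i, ∃ M, ∀ t ≥ (0:ℝ), |It i t| ≤ M)
    (hcconv : ∀ i j, Tendsto (fun t => c i j t - ct i j t) atTop (nhds 0))
    (hdconv : ∀ i j, Tendsto (fun t => d i j t - dt i j t) atTop (nhds 0))
    (hpconv : ∀ i j, Tendsto (fun t => p i j t - pt i j t) atTop (nhds 0))
    (hIconv : ∀ i, Tendsto (fun t => Iv i t - It i t) atTop (nhds 0))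
    -- the diagonal dominance condition
    (dv : Fin (n+1) → ℝ) (hdv : ∀ i, 0 < dv i)
    (hdom : ∀ i,
      (∑ j : Fin (n+1), aU j * dv j *
        (sSup ((fun t => |ct i j t|) '' Set.Ici 0) * Lf j
          + sSup ((fun t => |dt i j t|) '' Set.Ici 0) * Lg j
          + sSup ((fun t => |pt i j t|) '' Set.Ici 0) * Lh j))
        < dv i * aL i * β i)
    (x y : Fin (n+1) → ℝ → ℝ)
    (hx : LIsSolution n a b c d p Iv τ K f g h t₀ x)
    (hy : LIsSolution n a b ct dt pt It τ K f g h t₀ y) :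
    Tendsto (fun t => Finset.univ.sup' Finset.univ_nonempty (fun i => |x i t - y i t|))
      atTop (nhds 0) := by
  classical
  obtain ⟨hxc, hxb, hxd⟩ := hx
  obtain ⟨hyc, hyb, hyd⟩ := hy
  have hapos : ∀ i u, 0 < a i u := fun i u => lt_of_lt_of_le (haL i) (ha i u).1
  have haU : ∀ i, 0 < aU i := fun i => lt_of_lt_of_le (hapos i 0) (ha i 0).2
  have hK0' : ∀ i j, ∀ u > (0:ℝ), 0 ≤ K i j u := fun i j u hu => hK0 i j u hu.le
  -- sup bounds for the limit coefficients
  obtain ⟨C, hCdef⟩ : ∃ C : Fin (n+1) → Fin (n+1) → ℝ,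
      C = fun i j => sSup ((fun t => |ct i j t|) '' Set.Ici 0) := ⟨_, rfl⟩
  obtain ⟨D, hDdef⟩ : ∃ D : Fin (n+1) → Fin (n+1) → ℝ,
      D = fun i j => sSup ((fun t => |dt i j t|) '' Set.Ici 0) := ⟨_, rfl⟩
  obtain ⟨P, hPdef⟩ : ∃ P : Fin (n+1) → Fin (n+1) → ℝ,
      P = fun i j => sSup ((fun t => |pt i j t|) '' Set.Ici 0) := ⟨_, rfl⟩
  obtain ⟨IC, hICdef⟩ : ∃ IC : Fin (n+1) → ℝ,
      IC = fun i => sSup ((fun t => |It i t|) '' Set.Ici 0) := ⟨_, rfl⟩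
  have hCb : ∀ i j, ∀ t ≥ (0:ℝ), |ct i j t| ≤ C i j := by
    intro i j t ht
    obtain ⟨M, hM⟩ := hctbd i j
    rw [hCdef]
    exact le_csSup ⟨M, by rintro y' ⟨t', ht', rfl⟩; exact hM t' ht'⟩ ⟨t, ht, rfl⟩
  have hDb : ∀ i j, ∀ t ≥ (0:ℝ), |dt i j t| ≤ D i j := by
    intro i j t ht
    obtain ⟨M, hM⟩ := hdtbd i j
    rw [hDdef]
    exact le_csSup ⟨M, by rintro y' ⟨t', ht', rfl⟩; exact hM t' ht'⟩ ⟨t, ht, rfl⟩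
  have hPb : ∀ i j, ∀ t ≥ (0:ℝ), |pt i j t| ≤ P i j := by
    intro i j t ht
    obtain ⟨M, hM⟩ := hptbd i j
    rw [hPdef]
    exact le_csSup ⟨M, by rintro y' ⟨t', ht', rfl⟩; exact hM t' ht'⟩ ⟨t, ht, rfl⟩
  have hICb : ∀ i, ∀ t ≥ (0:ℝ), |It i t| ≤ IC i := by
    intro i t ht
    obtain ⟨M, hM⟩ := hItbd i
    rw [hICdef]
    exact le_csSup ⟨M, by rintro y' ⟨t', ht', rfl⟩; exact hM t' ht'⟩ ⟨t, ht, rfl⟩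
  have hdomC : ∀ i, (∑ j, aU j * dv j * (C i j * Lf j + D i j * Lg j + P i j * Lh j))
      < dv i * aL i * β i := by
    intro i
    simp only [hCdef, hDdef, hPdef]
    exact hdom i
  have hC0 : ∀ i j, 0 ≤ C i j := fun i j => (abs_nonneg _).trans (hCb i j 0 le_rfl)
  have hD0 : ∀ i j, 0 ≤ D i j := fun i j => (abs_nonneg _).trans (hDb i j 0 le_rfl)
  have hP0 : ∀ i j, 0 ≤ P i j := fun i j => (abs_nonneg _).trans (hPb i j 0 le_rfl)
  -- boundedness of y
  obtain ⟨By, hBy⟩ := bdd_solution t₀ (t₀+1) (by linarith) a b ct dt pt It τ K f g h hac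
    aL aU haL ha β hβ hb (fun i j t ht => hτ0 i j t (by linarith))
    hK0' hK1 hf0 hg0 hh0 Lf Lg Lh hLf hLg hLh hfl hgl hhl
    C D P IC (fun i j t ht => hCb i j t (by linarith)) (fun i j t ht => hDb i j t (by linarith))
    (fun i j t ht => hPb i j t (by linarith)) (fun i t ht => hICb i t (by linarith))
    dv hdv hdomC y ⟨hyc, hyb, hyd⟩
  -- slack for the dominance condition
  obtain ⟨Γt, hΓtdef⟩ : ∃ Γt : Fin (n+1) → ℝ,
      Γt = fun i => ∑ j, aU j * dv j * (C i j * Lf j + D i j * Lg j + P i j * Lh j) := ⟨_, rfl⟩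
  have hΓtlt : ∀ i, Γt i < dv i * aL i * β i := by
    intro i; rw [hΓtdef]; exact hdomC i
  have hΓt0 : ∀ i, 0 ≤ Γt i := by
    intro i
    rw [hΓtdef]
    refine Finset.sum_nonneg (fun j _ => ?_)
    have := hC0 i j; have := hD0 i j; have := hP0 i j
    have := (hLf j).le; have := (hLg j).le; have := (hLh j).le
    have := (haU j).le; have := (hdv j).le
    positivity
  obtain ⟨SL0, hSL0def⟩ : ∃ SL0 : ℝ, SL0 = ∑ j, aU j * dv j * (Lf j + Lg j + Lh j) := ⟨_, rfl⟩
  have hSL0pos : 0 < SL0 := by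
    rw [hSL0def]
    refine Finset.sum_pos (fun j _ => ?_) Finset.univ_nonempty
    have := hLf j; have := hLg j; have := hLh j
    have := haU j; have := hdv j
    positivity
  obtain ⟨sl, hsldef⟩ : ∃ sl : ℝ,
      sl = Finset.univ.inf' Finset.univ_nonempty (fun i => dv i * aL i * β i - Γt i) := ⟨_, rfl⟩
  have hslpos : 0 < sl := by
    rw [hsldef, Finset.lt_inf'_iff]
    exact fun i _ => sub_pos.2 (hΓtlt i)
  have hslle : ∀ i, sl ≤ dv i * aL i * β i - Γt i := by
    intro i; rw [hsldef]
    exact Finset.inf'_le _ (Finset.mem_univ i)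
  obtain ⟨ε₀, hε₀def⟩ : ∃ ε₀ : ℝ, ε₀ = sl / (2 * SL0) := ⟨_, rfl⟩
  have hε₀pos : 0 < ε₀ := by rw [hε₀def]; positivity
  have hε₀small : ε₀ * SL0 < sl := by
    rw [hε₀def]
    rw [div_mul_eq_mul_div, mul_comm (2:ℝ) SL0, ← div_div]
    rw [mul_div_assoc]
    rw [div_self (ne_of_gt hSL0pos)]
    linarith [hslpos]
  -- eventual closeness of coefficients
  have hclose : ∀ ε : ℝ, 0 < ε → ∀ᶠ t in atTop,
      (∀ i j, |c i j t - ct i j t| ≤ ε) ∧ (∀ i j, |d i j t - dt i j t| ≤ ε)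
      ∧ (∀ i j, |p i j t - pt i j t| ≤ ε) ∧ (∀ i, |Iv i t - It i t| ≤ ε) := by
    intro ε hε
    have h1 : ∀ᶠ t in atTop, ∀ i j, |c i j t - ct i j t| ≤ ε := by
      rw [eventually_all]; intro i; rw [eventually_all]; intro j
      filter_upwards [Metric.tendsto_nhds.1 (hcconv i j) ε hε] with t ht
      rw [Real.dist_eq, sub_zero] at ht; exact ht.le
    have h2 : ∀ᶠ t in atTop, ∀ i j, |d i j t - dt i j t| ≤ ε := by
      rw [eventually_all]; intro i; rw [eventually_all]; intro j
      filter_upwards [Metric.tendsto_nhds.1 (hdconv i j) ε hε] with t ht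
      rw [Real.dist_eq, sub_zero] at ht; exact ht.le
    have h3 : ∀ᶠ t in atTop, ∀ i j, |p i j t - pt i j t| ≤ ε := by
      rw [eventually_all]; intro i; rw [eventually_all]; intro j
      filter_upwards [Metric.tendsto_nhds.1 (hpconv i j) ε hε] with t ht
      rw [Real.dist_eq, sub_zero] at ht; exact ht.le
    have h4 : ∀ᶠ t in atTop, ∀ i, |Iv i t - It i t| ≤ ε := by
      rw [eventually_all]; intro i
      filter_upwards [Metric.tendsto_nhds.1 (hIconv i) ε hε] with t ht
      rw [Real.dist_eq, sub_zero] at ht; exact ht.le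
    filter_upwards [h1, h2, h3, h4] with t g1 g2 g3 g4
    exact ⟨g1, g2, g3, g4⟩
  -- boundedness of x
  obtain ⟨T₁x, hT₁x⟩ := eventually_atTop.1 (hclose ε₀ hε₀pos)
  obtain ⟨Bx, hBx⟩ : ∃ B, ∀ i, ∀ t, |x i t| ≤ B := by
    refine bdd_solution t₀ (max T₁x (t₀+1)) (lt_of_lt_of_le (by linarith) (le_max_right _ _))
      a b c d p Iv τ K f g h hac aL aU haL ha β hβ hb
      (fun i j t ht => hτ0 i j t
        (le_trans (by linarith : (0:ℝ) ≤ t₀+1) (le_trans (le_max_right _ _) ht)))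
      hK0' hK1 hf0 hg0 hh0 Lf Lg Lh hLf hLg hLh hfl hgl hhl
      (fun i j => C i j + ε₀) (fun i j => D i j + ε₀) (fun i j => P i j + ε₀)
      (fun i => IC i + ε₀) ?_ ?_ ?_ ?_ dv hdv ?_ x ⟨hxc, hxb, hxd⟩
    · intro i j t ht
      have h0t : (0:ℝ) ≤ t :=
        le_trans (by linarith : (0:ℝ) ≤ t₀+1) (le_trans (le_max_right _ _) ht)
      have h1 := (hT₁x t (le_trans (le_max_left _ _) ht)).1 i j
      have h2 := hCb i j t h0t
      calc |c i j t| = |ct i j t + (c i j t - ct i j t)| := by ring_nf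
      _ ≤ |ct i j t| + |c i j t - ct i j t| := abs_add_le _ _
      _ ≤ C i j + ε₀ := add_le_add h2 h1
    · intro i j t ht
      have h0t : (0:ℝ) ≤ t :=
        le_trans (by linarith : (0:ℝ) ≤ t₀+1) (le_trans (le_max_right _ _) ht)
      have h1 := (hT₁x t (le_trans (le_max_left _ _) ht)).2.1 i j
      have h2 := hDb i j t h0t
      calc |d i j t| = |dt i j t + (d i j t - dt i j t)| := by ring_nf
      _ ≤ |dt i j t| + |d i j t - dt i j t| := abs_add_le _ _
      _ ≤ D i j + ε₀ := add_le_add h2 h1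
    · intro i j t ht
      have h0t : (0:ℝ) ≤ t :=
        le_trans (by linarith : (0:ℝ) ≤ t₀+1) (le_trans (le_max_right _ _) ht)
      have h1 := (hT₁x t (le_trans (le_max_left _ _) ht)).2.2.1 i j
      have h2 := hPb i j t h0t
      calc |p i j t| = |pt i j t + (p i j t - pt i j t)| := by ring_nf
      _ ≤ |pt i j t| + |p i j t - pt i j t| := abs_add_le _ _
      _ ≤ P i j + ε₀ := add_le_add h2 h1
    · intro i t ht
      have h0t : (0:ℝ) ≤ t :=
        le_trans (by linarith : (0:ℝ) ≤ t₀+1) (le_trans (le_max_right _ _) ht)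
      have h1 := (hT₁x t (le_trans (le_max_left _ _) ht)).2.2.2 i
      have h2 := hICb i t h0t
      calc |Iv i t| = |It i t + (Iv i t - It i t)| := by ring_nf
      _ ≤ |It i t| + |Iv i t - It i t| := abs_add_le _ _
      _ ≤ IC i + ε₀ := add_le_add h2 h1
    · intro i
      have hsum : (∑ j, aU j * dv j * ((C i j + ε₀) * Lf j + (D i j + ε₀) * Lg j
          + (P i j + ε₀) * Lh j)) = Γt i + ε₀ * SL0 := by
        rw [hΓtdef, hSL0def, Finset.mul_sum, ← Finset.sum_add_distrib]
        exact Finset.sum_congr rfl (fun j _ => by ring)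
      rw [hsum]
      have := hslle i
      linarith [hε₀small]
  have hBx0 : 0 ≤ Bx := (abs_nonneg _).trans (hBx 0 0)
  have hBy0 : 0 ≤ By := (abs_nonneg _).trans (hBy 0 0)
  -- the transformed difference
  obtain ⟨ζ, hζdef⟩ : ∃ ζ : Fin (n+1) → ℝ → ℝ,
      ζ = fun i t => phiF (a i) (x i t) - phiF (a i) (y i t) := ⟨_, rfl⟩
  have hζc : ∀ i, Continuous (ζ i) := by
    intro i; rw [hζdef]
    exact ((phiF_cont (hac i) (hapos i)).comp (hxc i)).sub
      ((phiF_cont (hac i) (hapos i)).comp (hyc i))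
  have hζxy : ∀ i t, |x i t - y i t| ≤ aU i * |ζ i t| := by
    intro i t; rw [hζdef]
    exact phiF_abs_le (hac i) (haL i) (ha i) (y i t) (x i t)
  have hζle : ∀ i t, |ζ i t| ≤ (Bx + By) / aL i := by
    intro i t; rw [hζdef]
    refine (phiF_abs_sub_le (hac i) (haL i) (ha i) (y i t) (x i t)).trans ?_
    have h1 : |x i t - y i t| ≤ Bx + By := by
      calc |x i t - y i t| ≤ |x i t| + |y i t| := abs_sub _ _
      _ ≤ Bx + By := add_le_add (hBx i t) (hBy i t)
    exact (div_le_div_iff_of_pos_right (haL i)).2 h1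
  obtain ⟨Z, hZdef⟩ : ∃ Z : ℝ → ℝ,
      Z = fun t => Finset.univ.sup' Finset.univ_nonempty (fun i => |ζ i t| / dv i) := ⟨_, rfl⟩
  have hζZ : ∀ i t, |ζ i t| ≤ dv i * Z t := by
    intro i t
    have h1 : |ζ i t| / dv i ≤ Z t := by
      rw [hZdef]; exact Finset.le_sup' (f := fun i => |ζ i t| / dv i) (Finset.mem_univ i)
    rw [div_le_iff₀ (hdv i)] at h1; linarith
  have hZ0 : ∀ t, 0 ≤ Z t := fun t =>
    le_trans (div_nonneg (abs_nonneg _) (hdv 0).le)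
      (by rw [hZdef]; exact Finset.le_sup' (f := fun i => |ζ i t| / dv i) (Finset.mem_univ 0))
  obtain ⟨BZ, hBZdef⟩ : ∃ BZ : ℝ,
      BZ = Finset.univ.sup' Finset.univ_nonempty (fun i => (Bx + By) / (aL i * dv i)) := ⟨_, rfl⟩
  have hZle : ∀ t, Z t ≤ BZ := by
    intro t; rw [hZdef]
    refine Finset.sup'_le _ _ (fun i _ => ?_)
    have h1 := hζle i t
    rw [hBZdef]
    refine le_trans ?_
      (Finset.le_sup' (f := fun i => (Bx + By) / (aL i * dv i)) (Finset.mem_univ i))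
    have h2 : (Bx + By) / (aL i * dv i) = ((Bx + By) / aL i) / dv i := by rw [div_div]
    rw [h2]
    exact (div_le_div_iff_of_pos_right (hdv i)).2 h1
  have hBZ0 : 0 ≤ BZ := (hZ0 0).trans (hZle 0)
  -- limsup
  obtain ⟨L, hLdef⟩ : ∃ L : ℝ, L = Filter.limsup Z atTop := ⟨_, rfl⟩
  have hZbdd : Filter.IsBoundedUnder (· ≤ ·) atTop Z :=
    ⟨BZ, Filter.eventually_map.2 (Filter.Eventually.of_forall hZle)⟩
  have hZbdd' : Filter.IsBoundedUnder (· ≥ ·) atTop Z :=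
    ⟨0, Filter.eventually_map.2 (Filter.Eventually.of_forall hZ0)⟩
  have hcobdd : Filter.IsCoboundedUnder (· ≤ ·) atTop Z := hZbdd'.isCoboundedUnder_le
  have hL0 : 0 ≤ L := by
    rw [hLdef]
    exact Filter.le_limsup_of_frequently_le (Filter.Frequently.of_forall hZ0) hZbdd
  -- constants for the contraction
  obtain ⟨γf, hγfdef⟩ : ∃ γf : Fin (n+1) → ℝ, γf = fun i => aL i * β i := ⟨_, rfl⟩
  have hγfpos : ∀ i, 0 < γf i := by
    intro i; rw [hγfdef]; exact mul_pos (haL i) (hβ i)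
  obtain ⟨q, hqdef⟩ : ∃ q : ℝ,
      q = Finset.univ.sup' Finset.univ_nonempty (fun i => Γt i / (γf i * dv i)) := ⟨_, rfl⟩
  have hq1 : q < 1 := by
    rw [hqdef, Finset.sup'_lt_iff]
    intro i _
    rw [div_lt_one (mul_pos (hγfpos i) (hdv i))]
    calc Γt i < dv i * aL i * β i := hΓtlt i
    _ = γf i * dv i := by rw [hγfdef]; ring
  have hqi : ∀ i, Γt i / (γf i * dv i) ≤ q := by
    intro i; rw [hqdef]
    exact Finset.le_sup' (f := fun i => Γt i / (γf i * dv i)) (Finset.mem_univ i)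
  have hq0 : 0 ≤ q := le_trans (div_nonneg (hΓt0 0) (mul_pos (hγfpos 0) (hdv 0)).le) (hqi 0)
  obtain ⟨SLs, hSLsdef⟩ : ∃ SLs : ℝ, SLs = ∑ j, (Lf j + Lg j + Lh j) := ⟨_, rfl⟩
  have hSLs0 : 0 ≤ SLs := by
    rw [hSLsdef]
    exact Finset.sum_nonneg fun j _ =>
      add_nonneg (add_nonneg (hLf j).le (hLg j).le) (hLh j).le
  obtain ⟨Θ, hΘdef⟩ : ∃ Θ : Fin (n+1) → ℝ, Θ = fun i => Γt i * BZ + Bx * SLs + 1 := ⟨_, rfl⟩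
  have hΘ0 : ∀ i, 0 ≤ Θ i := by
    intro i; rw [hΘdef]
    have h1 := mul_nonneg (hΓt0 i) hBZ0
    have h2 := mul_nonneg hBx0 hSLs0
    simp only
    linarith
  obtain ⟨Θ', hΘ'def⟩ : ∃ Θ' : ℝ,
      Θ' = Finset.univ.sup' Finset.univ_nonempty (fun i => Θ i / (γf i * dv i)) := ⟨_, rfl⟩
  have hΘ'i : ∀ i, Θ i / (γf i * dv i) ≤ Θ' := by
    intro i; rw [hΘ'def]
    exact Finset.le_sup' (f := fun i => Θ i / (γf i * dv i)) (Finset.mem_univ i)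
  have hΘ'0 : 0 ≤ Θ' :=
    le_trans (div_nonneg (hΘ0 0) (mul_pos (hγfpos 0) (hdv 0)).le) (hΘ'i 0)
  -- integrability of the kernel terms
  have hKint : ∀ i j, IntegrableOn (K i j) (Set.Ioi 0) volume :=
    fun i j => kernel_integrable (hK1 i j)
  have hKm : ∀ i j, AEStronglyMeasurable (K i j) (volume.restrict (Set.Ioi 0)) := fun i j =>
    ((hKc i j).mono Set.Ioi_subset_Ici_self).aestronglyMeasurable measurableSet_Ioi
  have hIntx : ∀ i j (r : ℝ),
      Integrable (fun u => K i j u * h j (x j (r - u))) (volume.restrict (Set.Ioi 0)) := by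
    intro i j r
    refine Integrable.mono' ((hKint i j).mul_const (Lh j * Bx))
      ((hKm i j).mul (((hhc j).comp
        ((hxc j).comp (continuous_const.sub continuous_id))).aestronglyMeasurable.restrict)) ?_
    refine MeasureTheory.ae_restrict_of_forall_mem measurableSet_Ioi (fun u hu => ?_)
    rw [Real.norm_eq_abs, abs_mul, abs_of_nonneg (hK0' i j u hu)]
    refine mul_le_mul_of_nonneg_left ?_ (hK0' i j u hu)
    have h1 : |h j (x j (r - u))| ≤ Lh j * |x j (r - u)| := by
      simpa [hh0 j] using hhl j (x j (r - u)) 0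
    exact h1.trans (mul_le_mul_of_nonneg_left (hBx j (r - u)) (hLh j).le)
  have hInty : ∀ i j (r : ℝ),
      Integrable (fun u => K i j u * h j (y j (r - u))) (volume.restrict (Set.Ioi 0)) := by
    intro i j r
    refine Integrable.mono' ((hKint i j).mul_const (Lh j * By))
      ((hKm i j).mul (((hhc j).comp
        ((hyc j).comp (continuous_const.sub continuous_id))).aestronglyMeasurable.restrict)) ?_
    refine MeasureTheory.ae_restrict_of_forall_mem measurableSet_Ioi (fun u hu => ?_)
    rw [Real.norm_eq_abs, abs_mul, abs_of_nonneg (hK0' i j u hu)]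
    refine mul_le_mul_of_nonneg_left ?_ (hK0' i j u hu)
    have h1 : |h j (y j (r - u))| ≤ Lh j * |y j (r - u)| := by
      simpa [hh0 j] using hhl j (y j (r - u)) 0
    exact h1.trans (mul_le_mul_of_nonneg_left (hBy j (r - u)) (hLh j).le)
  -- Lipschitz consequences
  have hfb : ∀ j t, |f j (x j t)| ≤ Lf j * Bx := by
    intro j t
    have h1 : |f j (x j t)| ≤ Lf j * |x j t| := by simpa [hf0 j] using hfl j (x j t) 0
    exact h1.trans (mul_le_mul_of_nonneg_left (hBx j t) (hLf j).le)
  have hgb : ∀ j t, |g j (x j t)| ≤ Lg j * Bx := by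
    intro j t
    have h1 : |g j (x j t)| ≤ Lg j * |x j t| := by simpa [hg0 j] using hgl j (x j t) 0
    exact h1.trans (mul_le_mul_of_nonneg_left (hBx j t) (hLg j).le)
  have hfd : ∀ j s, |f j (x j s) - f j (y j s)| ≤ Lf j * (aU j * (dv j * Z s)) := by
    intro j s
    refine (hfl j _ _).trans (mul_le_mul_of_nonneg_left ?_ (hLf j).le)
    exact (hζxy j s).trans (mul_le_mul_of_nonneg_left (hζZ j s) (haU j).le)
  have hgd : ∀ j s, |g j (x j s) - g j (y j s)| ≤ Lg j * (aU j * (dv j * Z s)) := by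
    intro j s
    refine (hgl j _ _).trans (mul_le_mul_of_nonneg_left ?_ (hLg j).le)
    exact (hζxy j s).trans (mul_le_mul_of_nonneg_left (hζZ j s) (haU j).le)
  have hhd : ∀ j s, |h j (x j s) - h j (y j s)| ≤ Lh j * (aU j * (dv j * Z s)) := by
    intro j s
    refine (hhl j _ _).trans (mul_le_mul_of_nonneg_left ?_ (hLh j).le)
    exact (hζxy j s).trans (mul_le_mul_of_nonneg_left (hζZ j s) (haU j).le)
  -- derivative of ζ
  have hζd : ∀ i (r : ℝ), t₀ < r → HasDerivAt (ζ i)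
      (-(b i (x i r) - b i (y i r)) +
        (((∑ j, c i j r * f j (x j r)) - ∑ j, ct i j r * f j (y j r))
        + ((∑ j, d i j r * g j (x j (r - τ i j r))) - ∑ j, dt i j r * g j (y j (r - τ i j r)))
        + ((∑ j, p i j r * ∫ u in Set.Ioi (0:ℝ), K i j u * h j (x j (r - u)))
            - ∑ j, pt i j r * ∫ u in Set.Ioi (0:ℝ), K i j u * h j (y j (r - u)))
        + (Iv i r - It i r))) r := by
    intro i r hr
    have hxw : HasDerivAt (fun t => phiF (a i) (x i t))
        ((a i (x i r))⁻¹ * Lrhs n a b c d p Iv τ K f g h x i r) r :=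
      HasDerivAt.comp r (phiF_hasDerivAt (hac i) (hapos i) (x i r)) (hxd i r hr)
    have hyw : HasDerivAt (fun t => phiF (a i) (y i t))
        ((a i (y i r))⁻¹ * Lrhs n a b ct dt pt It τ K f g h y i r) r :=
      HasDerivAt.comp r (phiF_hasDerivAt (hac i) (hapos i) (y i r)) (hyd i r hr)
    have hsub := hxw.sub hyw
    have hanex : a i (x i r) ≠ 0 := ne_of_gt (hapos i (x i r))
    have haney : a i (y i r) ≠ 0 := ne_of_gt (hapos i (y i r))
    have heq : (a i (x i r))⁻¹ * Lrhs n a b c d p Iv τ K f g h x i r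
        - (a i (y i r))⁻¹ * Lrhs n a b ct dt pt It τ K f g h y i r
        = -(b i (x i r) - b i (y i r)) +
        (((∑ j, c i j r * f j (x j r)) - ∑ j, ct i j r * f j (y j r))
        + ((∑ j, d i j r * g j (x j (r - τ i j r))) - ∑ j, dt i j r * g j (y j (r - τ i j r)))
        + ((∑ j, p i j r * ∫ u in Set.Ioi (0:ℝ), K i j u * h j (x j (r - u)))
            - ∑ j, pt i j r * ∫ u in Set.Ioi (0:ℝ), K i j u * h j (y j (r - u)))
        + (Iv i r - It i r)) := by
      simp only [Lrhs]
      rw [inv_mul_cancel_left₀ hanex, inv_mul_cancel_left₀ haney]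
      ring
    rw [heq] at hsub
    rw [hζdef]
    exact hsub
  -- the key contraction estimate
  have main : ∀ ε : ℝ, 0 < ε → L ≤ q * (L + ε) + ε * (Θ' + 1) := by
    intro ε hε
    have hLε0 : 0 ≤ L + ε := by linarith
    have hZev : ∀ᶠ t in atTop, Z t ≤ L + ε := by
      have h1 : Filter.limsup Z atTop < L + ε := by rw [← hLdef]; linarith
      filter_upwards [Filter.eventually_lt_of_limsup_lt h1 hZbdd] with t ht
      exact ht.le
    obtain ⟨T₁, hT₁⟩ := eventually_atTop.1 ((hclose ε hε).and hZev)
    have htails : ∀ᶠ S in atTop, ∀ i j, ∫ u in Set.Ioi S, K i j u ≤ ε := by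
      rw [eventually_all]; intro i; rw [eventually_all]; intro j
      filter_upwards [Metric.tendsto_nhds.1 (kernel_tail_tendsto (hK1 i j)) ε hε] with S hS
      rw [Real.dist_eq, sub_zero] at hS
      exact (le_abs_self _).trans hS.le
    obtain ⟨S₀, hS₀⟩ := eventually_atTop.1 htails
    obtain ⟨S, hSdef⟩ : ∃ S : ℝ, S = max S₀ 1 := ⟨_, rfl⟩
    have hS1 : (1:ℝ) ≤ S := by rw [hSdef]; exact le_max_right _ _
    have hSpos : (0:ℝ) < S := lt_of_lt_of_le one_pos hS1
    have hStail : ∀ i j, ∫ u in Set.Ioi S, K i j u ≤ ε := fun i j =>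
      hS₀ S (by rw [hSdef]; exact le_max_left _ _) i j
    choose Mt hMt using hτbd
    obtain ⟨Mτ, hMτdef⟩ : ∃ Mτ : ℝ, Mτ = Finset.univ.sup' Finset.univ_nonempty
        (fun i => Finset.univ.sup' Finset.univ_nonempty (fun j => Mt i j)) := ⟨_, rfl⟩
    have hMτb : ∀ i j (t : ℝ), 0 ≤ t → τ i j t ≤ Mτ := by
      intro i j t ht
      refine (hMt i j t ht).trans ?_
      rw [hMτdef]
      refine le_trans (Finset.le_sup' (f := fun j => Mt i j) (Finset.mem_univ j)) ?_
      exact Finset.le_sup'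
        (f := fun i => Finset.univ.sup' Finset.univ_nonempty (fun j => Mt i j))
        (Finset.mem_univ i)
    have hMτ0 : 0 ≤ Mτ := le_trans (hτ0 0 0 0 le_rfl) (hMτb 0 0 0 le_rfl)
    obtain ⟨T', hT'def⟩ : ∃ T' : ℝ, T' = max T₁ 0 + S + Mτ + t₀ + 1 := ⟨_, rfl⟩
    have hmaxT₁ : T₁ ≤ max T₁ 0 := le_max_left _ _
    have hmax0 : (0:ℝ) ≤ max T₁ 0 := le_max_right _ _
    have hT't₀ : t₀ < T' := by rw [hT'def]; linarith
    have hT'0 : (0:ℝ) ≤ T' := by rw [hT'def]; linarith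
    have hT'T₁ : T₁ ≤ T' := by rw [hT'def]; linarith
    -- the perturbation estimate
    have hΔR : ∀ i (r : ℝ), T' ≤ r →
        |(((∑ j, c i j r * f j (x j r)) - ∑ j, ct i j r * f j (y j r))
        + ((∑ j, d i j r * g j (x j (r - τ i j r))) - ∑ j, dt i j r * g j (y j (r - τ i j r)))
        + ((∑ j, p i j r * ∫ u in Set.Ioi (0:ℝ), K i j u * h j (x j (r - u)))
            - ∑ j, pt i j r * ∫ u in Set.Ioi (0:ℝ), K i j u * h j (y j (r - u)))
        + (Iv i r - It i r))|
        ≤ Γt i * (L + ε) + ε * Θ i := by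
      intro i r hr
      have hr0 : (0:ℝ) ≤ r := hT'0.trans hr
      have hrT₁ : T₁ ≤ r := hT'T₁.trans hr
      have hcl := hT₁ r hrT₁
      have hZr : Z r ≤ L + ε := hcl.2
      have hA1 : |(∑ j, c i j r * f j (x j r)) - ∑ j, ct i j r * f j (y j r)|
          ≤ ∑ j, (aU j * dv j * (C i j * Lf j) * (L + ε) + ε * (Bx * Lf j)) := by
        rw [← Finset.sum_sub_distrib]
        refine le_trans (Finset.abs_sum_le_sum_abs _ _) ?_
        have hterm : ∀ j ∈ Finset.univ, |c i j r * f j (x j r) - ct i j r * f j (y j r)|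
            ≤ aU j * dv j * (C i j * Lf j) * (L + ε) + ε * (Bx * Lf j) := by
          intro j _
          have hsplit : c i j r * f j (x j r) - ct i j r * f j (y j r)
              = ct i j r * (f j (x j r) - f j (y j r)) + (c i j r - ct i j r) * f j (x j r) := by
            ring
          rw [hsplit]
          refine (abs_add_le _ _).trans ?_
          rw [abs_mul, abs_mul]
          have h1 : |ct i j r| * |f j (x j r) - f j (y j r)|
              ≤ C i j * (Lf j * (aU j * (dv j * (L + ε)))) := by
            refine mul_le_mul (hCb i j r hr0) ?_ (abs_nonneg _) (hC0 i j)
            refine (hfd j r).trans ?_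
            have h2 := mul_le_mul_of_nonneg_left hZr (hdv j).le
            have h3 := mul_le_mul_of_nonneg_left h2 (haU j).le
            exact mul_le_mul_of_nonneg_left h3 (hLf j).le
          have h2 : |c i j r - ct i j r| * |f j (x j r)| ≤ ε * (Lf j * Bx) :=
            mul_le_mul (hcl.1.1 i j) (hfb j r) (abs_nonneg _) hε.le
          have he1 : C i j * (Lf j * (aU j * (dv j * (L + ε))))
              = aU j * dv j * (C i j * Lf j) * (L + ε) := by ring
          have he2 : ε * (Lf j * Bx) = ε * (Bx * Lf j) := by ring
          linarith
        exact Finset.sum_le_sum hterm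
      have hA2 : |(∑ j, d i j r * g j (x j (r - τ i j r)))
            - ∑ j, dt i j r * g j (y j (r - τ i j r))|
          ≤ ∑ j, (aU j * dv j * (D i j * Lg j) * (L + ε) + ε * (Bx * Lg j)) := by
        rw [← Finset.sum_sub_distrib]
        refine le_trans (Finset.abs_sum_le_sum_abs _ _) ?_
        have hterm : ∀ j ∈ Finset.univ,
            |d i j r * g j (x j (r - τ i j r)) - dt i j r * g j (y j (r - τ i j r))|
            ≤ aU j * dv j * (D i j * Lg j) * (L + ε) + ε * (Bx * Lg j) := by
          intro j _
          have hZdel : Z (r - τ i j r) ≤ L + ε := by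
            refine (hT₁ (r - τ i j r) ?_).2
            have hτle := hMτb i j r hr0
            rw [hT'def] at hr
            linarith
          have hsplit : d i j r * g j (x j (r - τ i j r)) - dt i j r * g j (y j (r - τ i j r))
              = dt i j r * (g j (x j (r - τ i j r)) - g j (y j (r - τ i j r)))
                + (d i j r - dt i j r) * g j (x j (r - τ i j r)) := by
            ring
          rw [hsplit]
          refine (abs_add_le _ _).trans ?_
          rw [abs_mul, abs_mul]
          have h1 : |dt i j r| * |g j (x j (r - τ i j r)) - g j (y j (r - τ i j r))|
              ≤ D i j * (Lg j * (aU j * (dv j * (L + ε)))) := by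
            refine mul_le_mul (hDb i j r hr0) ?_ (abs_nonneg _) (hD0 i j)
            refine (hgd j (r - τ i j r)).trans ?_
            have h2 := mul_le_mul_of_nonneg_left hZdel (hdv j).le
            have h3 := mul_le_mul_of_nonneg_left h2 (haU j).le
            exact mul_le_mul_of_nonneg_left h3 (hLg j).le
          have h2 : |d i j r - dt i j r| * |g j (x j (r - τ i j r))| ≤ ε * (Lg j * Bx) :=
            mul_le_mul (hcl.1.2.1 i j) (hgb j _) (abs_nonneg _) hε.le
          have he1 : D i j * (Lg j * (aU j * (dv j * (L + ε))))
              = aU j * dv j * (D i j * Lg j) * (L + ε) := by ring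
          have he2 : ε * (Lg j * Bx) = ε * (Bx * Lg j) := by ring
          linarith
        exact Finset.sum_le_sum hterm
      have hA3 : |(∑ j, p i j r * ∫ u in Set.Ioi (0:ℝ), K i j u * h j (x j (r - u)))
            - ∑ j, pt i j r * ∫ u in Set.Ioi (0:ℝ), K i j u * h j (y j (r - u))|
          ≤ ∑ j, (aU j * dv j * (P i j * Lh j) * (L + ε)
            + (ε * (aU j * dv j * (P i j * Lh j) * BZ) + ε * (Bx * Lh j))) := by
        rw [← Finset.sum_sub_distrib]
        refine le_trans (Finset.abs_sum_le_sum_abs _ _) ?_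
        have hterm : ∀ j ∈ Finset.univ,
            |p i j r * (∫ u in Set.Ioi (0:ℝ), K i j u * h j (x j (r - u)))
              - pt i j r * ∫ u in Set.Ioi (0:ℝ), K i j u * h j (y j (r - u))|
            ≤ aU j * dv j * (P i j * Lh j) * (L + ε)
              + (ε * (aU j * dv j * (P i j * Lh j) * BZ) + ε * (Bx * Lh j)) := by
          intro j _
          have hintdiff : (∫ u in Set.Ioi (0:ℝ), K i j u * h j (x j (r - u)))
              - ∫ u in Set.Ioi (0:ℝ), K i j u * h j (y j (r - u))
              = ∫ u in Set.Ioi (0:ℝ),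
                  K i j u * (h j (x j (r - u)) - h j (y j (r - u))) := by
            rw [← MeasureTheory.integral_sub (hIntx i j r) (hInty i j r)]
            refine MeasureTheory.integral_congr_ae (Filter.Eventually.of_forall fun u => ?_)
            ring
          have hKS : |∫ u in Set.Ioi (0:ℝ),
                K i j u * (h j (x j (r - u)) - h j (y j (r - u)))|
              ≤ Lh j * (aU j * (dv j * (L + ε))) + Lh j * (aU j * (dv j * BZ)) * ε := by
            refine kernel_split_bound (hK0' i j) (hK1 i j) (hKm i j) hSpos ?_ ?_
              (hStail i j) ?_ ?_
            · have := (hLh j).le; have := (haU j).le; have := (hdv j).le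
              positivity
            · have := (hLh j).le; have := (haU j).le; have := (hdv j).le
              positivity
            · intro u hu
              have hZdel : Z (r - u) ≤ L + ε := by
                refine (hT₁ (r - u) ?_).2
                rw [hT'def] at hr
                have := hu.2
                linarith
              refine (hhd j (r - u)).trans ?_
              have h2 := mul_le_mul_of_nonneg_left hZdel (hdv j).le
              have h3 := mul_le_mul_of_nonneg_left h2 (haU j).le
              exact mul_le_mul_of_nonneg_left h3 (hLh j).le
            · intro u _
              refine (hhd j (r - u)).trans ?_
              have h2 := mul_le_mul_of_nonneg_left (hZle (r - u)) (hdv j).le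
              have h3 := mul_le_mul_of_nonneg_left h2 (haU j).le
              exact mul_le_mul_of_nonneg_left h3 (hLh j).le
          have hsplit : p i j r * (∫ u in Set.Ioi (0:ℝ), K i j u * h j (x j (r - u)))
              - pt i j r * ∫ u in Set.Ioi (0:ℝ), K i j u * h j (y j (r - u))
              = pt i j r * ((∫ u in Set.Ioi (0:ℝ), K i j u * h j (x j (r - u)))
                  - ∫ u in Set.Ioi (0:ℝ), K i j u * h j (y j (r - u)))
                + (p i j r - pt i j r)
                  * ∫ u in Set.Ioi (0:ℝ), K i j u * h j (x j (r - u)) := by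
            ring
          rw [hsplit]
          refine (abs_add_le _ _).trans ?_
          rw [abs_mul, abs_mul]
          have h1 : |pt i j r| * |(∫ u in Set.Ioi (0:ℝ), K i j u * h j (x j (r - u)))
              - ∫ u in Set.Ioi (0:ℝ), K i j u * h j (y j (r - u))|
              ≤ P i j * (Lh j * (aU j * (dv j * (L + ε)))
                  + Lh j * (aU j * (dv j * BZ)) * ε) := by
            refine mul_le_mul (hPb i j r hr0) ?_ (abs_nonneg _) (hP0 i j)
            rw [hintdiff]
            exact hKS
          have h2 : |p i j r - pt i j r|
              * |∫ u in Set.Ioi (0:ℝ), K i j u * h j (x j (r - u))| ≤ ε * (Lh j * Bx) := by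
            refine mul_le_mul (hcl.1.2.2.1 i j) ?_ (abs_nonneg _) hε.le
            refine kernel_integral_bound (hK0' i j) (hK1 i j) (fun u _ => ?_)
            have h3 : |h j (x j (r - u))| ≤ Lh j * |x j (r - u)| := by
              simpa [hh0 j] using hhl j (x j (r - u)) 0
            exact h3.trans (mul_le_mul_of_nonneg_left (hBx j (r - u)) (hLh j).le)
          have he1 : P i j * (Lh j * (aU j * (dv j * (L + ε)))
                + Lh j * (aU j * (dv j * BZ)) * ε)
              = aU j * dv j * (P i j * Lh j) * (L + ε)
                + ε * (aU j * dv j * (P i j * Lh j) * BZ) := by ring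
          have he2 : ε * (Lh j * Bx) = ε * (Bx * Lh j) := by ring
          linarith
        exact Finset.sum_le_sum hterm
      have hA4 : |Iv i r - It i r| ≤ ε := hcl.1.2.2.2 i
      -- assemble
      have habs : |(((∑ j, c i j r * f j (x j r)) - ∑ j, ct i j r * f j (y j r))
          + ((∑ j, d i j r * g j (x j (r - τ i j r)))
              - ∑ j, dt i j r * g j (y j (r - τ i j r)))
          + ((∑ j, p i j r * ∫ u in Set.Ioi (0:ℝ), K i j u * h j (x j (r - u)))
              - ∑ j, pt i j r * ∫ u in Set.Ioi (0:ℝ), K i j u * h j (y j (r - u)))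
          + (Iv i r - It i r))|
          ≤ |(∑ j, c i j r * f j (x j r)) - ∑ j, ct i j r * f j (y j r)|
            + |(∑ j, d i j r * g j (x j (r - τ i j r)))
                - ∑ j, dt i j r * g j (y j (r - τ i j r))|
            + |(∑ j, p i j r * ∫ u in Set.Ioi (0:ℝ), K i j u * h j (x j (r - u)))
                - ∑ j, pt i j r * ∫ u in Set.Ioi (0:ℝ), K i j u * h j (y j (r - u))|
            + |Iv i r - It i r| :=
        le_trans (abs_add_le _ _) (add_le_add (le_trans (abs_add_le _ _)
          (add_le_add (abs_add_le _ _) le_rfl)) le_rfl)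
      have hSp : (∑ j, aU j * dv j * (P i j * Lh j)) ≤ Γt i := by
        rw [hΓtdef]
        refine Finset.sum_le_sum (fun j _ => ?_)
        refine mul_le_mul_of_nonneg_left ?_ (mul_nonneg (haU j).le (hdv j).le)
        have h1 := mul_nonneg (hC0 i j) (hLf j).le
        have h2 := mul_nonneg (hD0 i j) (hLg j).le
        linarith
      have hSpBZ : ε * ((∑ j, aU j * dv j * (P i j * Lh j)) * BZ) ≤ ε * (Γt i * BZ) :=
        mul_le_mul_of_nonneg_left (mul_le_mul_of_nonneg_right hSp hBZ0) hε.le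
      have hEq : (∑ j, (aU j * dv j * (C i j * Lf j) * (L + ε) + ε * (Bx * Lf j)))
          + (∑ j, (aU j * dv j * (D i j * Lg j) * (L + ε) + ε * (Bx * Lg j)))
          + (∑ j, (aU j * dv j * (P i j * Lh j) * (L + ε)
              + (ε * (aU j * dv j * (P i j * Lh j) * BZ) + ε * (Bx * Lh j))))
          = Γt i * (L + ε) + ε * ((∑ j, aU j * dv j * (P i j * Lh j)) * BZ)
            + ε * (Bx * SLs) := by
        simp only [hΓtdef, hSLsdef]
        rw [Finset.sum_mul, Finset.sum_mul, Finset.mul_sum, Finset.mul_sum, Finset.mul_sum]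
        rw [← Finset.sum_add_distrib, ← Finset.sum_add_distrib, ← Finset.sum_add_distrib,
          ← Finset.sum_add_distrib]
        exact Finset.sum_congr rfl (fun j _ => by ring)
      have hΘmul : ε * Θ i = ε * (Γt i * BZ) + ε * (Bx * SLs) + ε := by
        simp only [hΘdef]
        ring
      linarith [habs, hA1, hA2, hA3, hA4, hEq, hSpBZ, hΘmul]
    -- Grönwall on [T', t]
    have hGron : ∀ i (t : ℝ), T' ≤ t → |ζ i t| ≤ dv i * BZ * Real.exp (-γf i * (t - T'))
        + (Γt i * (L + ε) + ε * Θ i) / γf i := by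
      intro i t ht
      have hε2 : 0 ≤ Γt i * (L + ε) + ε * Θ i :=
        add_nonneg (mul_nonneg (hΓt0 i) hLε0) (mul_nonneg hε.le (hΘ0 i))
      have hδ0 : 0 ≤ dv i * BZ := mul_nonneg (hdv i).le hBZ0
      refine gronwall_decay (γ := γf i) (δ := dv i * BZ) (ε := Γt i * (L + ε) + ε * Θ i)
        (v := fun s => |ζ i s|)
        (D := fun r => -γf i * |ζ i r| + (Γt i * (L + ε) + ε * Θ i))
        (hγfpos i) hδ0 hε2 ht ((hζc i).abs.continuousOn)
        ?_ (fun r _ => le_rfl) ?_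
      · intro r hrI
        have hrT' : T' ≤ r := hrI.1
        have hrt₀ : t₀ < r := lt_of_lt_of_le hT't₀ hrT'
        have hd' := hζd i r hrt₀
        have hRb := hΔR i r hrT'
        have hγeq : γf i = aL i * β i := by rw [hγfdef]
        refine abs_slope_frequently hd' ?_ ?_ ?_
        · intro hpos
          show -(b i (x i r) - b i (y i r))
              + (((∑ j, c i j r * f j (x j r)) - ∑ j, ct i j r * f j (y j r))
              + ((∑ j, d i j r * g j (x j (r - τ i j r)))
                  - ∑ j, dt i j r * g j (y j (r - τ i j r)))
              + ((∑ j, p i j r * ∫ u in Set.Ioi (0:ℝ), K i j u * h j (x j (r - u)))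
                  - ∑ j, pt i j r * ∫ u in Set.Ioi (0:ℝ), K i j u * h j (y j (r - u)))
              + (Iv i r - It i r))
              ≤ -γf i * |ζ i r| + (Γt i * (L + ε) + ε * Θ i)
          have hpos' : 0 < phiF (a i) (x i r) - phiF (a i) (y i r) := by
            have h0 := hpos
            rw [hζdef] at h0
            exact h0
          have hyx : y i r < x i r :=
            (phiF_pos_iff (hac i) (haL i) (ha i) (y i r) (x i r)).1 hpos'
          have hbb : β i * (x i r - y i r) ≤ b i (x i r) - b i (y i r) := by
            have hble := hb i (x i r) (y i r) (ne_of_gt hyx)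
            exact (le_div_iff₀ (sub_pos.2 hyx)).1 hble
          have hζlow : aL i * |ζ i r| ≤ x i r - y i r := by
            have h2 := (phiF_sub_bounds (hac i) (haL i) (ha i) hyx.le).2
            rw [abs_of_pos hpos]
            have h3 : ζ i r = phiF (a i) (x i r) - phiF (a i) (y i r) := by rw [hζdef]
            rw [h3]
            rw [le_div_iff₀ (haL i)] at h2
            linarith
          have hmul : β i * (aL i * |ζ i r|) ≤ β i * (x i r - y i r) :=
            mul_le_mul_of_nonneg_left hζlow (hβ i).le
          have hmul2 : β i * (aL i * |ζ i r|) = γf i * |ζ i r| := by rw [hγeq]; ring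
          have hR1 := le_trans (le_abs_self _) hRb
          linarith
        · intro hneg
          show -(-(b i (x i r) - b i (y i r))
              + (((∑ j, c i j r * f j (x j r)) - ∑ j, ct i j r * f j (y j r))
              + ((∑ j, d i j r * g j (x j (r - τ i j r)))
                  - ∑ j, dt i j r * g j (y j (r - τ i j r)))
              + ((∑ j, p i j r * ∫ u in Set.Ioi (0:ℝ), K i j u * h j (x j (r - u)))
                  - ∑ j, pt i j r * ∫ u in Set.Ioi (0:ℝ), K i j u * h j (y j (r - u)))
              + (Iv i r - It i r)))
              ≤ -γf i * |ζ i r| + (Γt i * (L + ε) + ε * Θ i)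
          have hneg' : 0 < phiF (a i) (y i r) - phiF (a i) (x i r) := by
            have h0 := hneg
            rw [hζdef] at h0
            simp only at h0
            linarith
          have hxy : x i r < y i r :=
            (phiF_pos_iff (hac i) (haL i) (ha i) (x i r) (y i r)).1 hneg'
          have hbb : β i * (y i r - x i r) ≤ b i (y i r) - b i (x i r) := by
            have hble := hb i (y i r) (x i r) (ne_of_gt hxy)
            exact (le_div_iff₀ (sub_pos.2 hxy)).1 hble
          have hζlow : aL i * |ζ i r| ≤ y i r - x i r := by
            have h2 := (phiF_sub_bounds (hac i) (haL i) (ha i) hxy.le).2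
            rw [abs_of_neg hneg]
            have h3 : ζ i r = phiF (a i) (x i r) - phiF (a i) (y i r) := by rw [hζdef]
            rw [h3]
            rw [le_div_iff₀ (haL i)] at h2
            linarith
          have hmul : β i * (aL i * |ζ i r|) ≤ β i * (y i r - x i r) :=
            mul_le_mul_of_nonneg_left hζlow (hβ i).le
          have hmul2 : β i * (aL i * |ζ i r|) = γf i * |ζ i r| := by rw [hγeq]; ring
          have hR1 := le_trans (neg_le_abs _) hRb
          linarith
        · intro hzero
          show |(-(b i (x i r) - b i (y i r))
              + (((∑ j, c i j r * f j (x j r)) - ∑ j, ct i j r * f j (y j r))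
              + ((∑ j, d i j r * g j (x j (r - τ i j r)))
                  - ∑ j, dt i j r * g j (y j (r - τ i j r)))
              + ((∑ j, p i j r * ∫ u in Set.Ioi (0:ℝ), K i j u * h j (x j (r - u)))
                  - ∑ j, pt i j r * ∫ u in Set.Ioi (0:ℝ), K i j u * h j (y j (r - u)))
              + (Iv i r - It i r)))|
              ≤ -γf i * |ζ i r| + (Γt i * (L + ε) + ε * Θ i)
          have hxy : x i r = y i r := by
            have h1 := hζxy i r
            rw [hzero, abs_zero, mul_zero] at h1
            have h2 := abs_eq_zero.1 (le_antisymm h1 (abs_nonneg _))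
            linarith [sub_eq_zero.1 h2]
          have hbeq : b i (x i r) - b i (y i r) = 0 := by rw [hxy]; ring
          rw [hbeq, neg_zero, zero_add, hzero, abs_zero, mul_zero, zero_add]
          exact hRb
      · exact (hζZ i T').trans (mul_le_mul_of_nonneg_left (hZle T') (hdv i).le)
    -- let t → ∞
    have hev2 : ∀ᶠ t in atTop, ∀ i, dv i * BZ * Real.exp (-γf i * (t - T')) ≤ ε * dv i := by
      rw [eventually_all]; intro i
      have htend : Tendsto (fun t : ℝ => dv i * BZ * Real.exp (-γf i * (t - T')))
          atTop (nhds 0) := by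
        have h2 : Tendsto (fun t : ℝ => t - T') atTop atTop :=
          tendsto_atTop_add_const_right _ _ tendsto_id
        have h3 : Tendsto (fun t : ℝ => γf i * (t - T')) atTop atTop :=
          h2.const_mul_atTop (hγfpos i)
        have h1 : Tendsto (fun t : ℝ => -γf i * (t - T')) atTop atBot := by
          have h4 := tendsto_neg_atTop_atBot.comp h3
          refine h4.congr (fun t => ?_)
          simp only [Function.comp_apply]
          ring
        have h4 := Real.tendsto_exp_atBot.comp h1
        have h5 : Tendsto (fun t : ℝ => Real.exp (-γf i * (t - T'))) atTop (nhds 0) := h4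
        simpa using h5.const_mul (dv i * BZ)
      filter_upwards [Metric.tendsto_nhds.1 htend (ε * dv i) (mul_pos hε (hdv i))] with t htt
      rw [Real.dist_eq, sub_zero] at htt
      exact (le_abs_self _).trans htt.le
    have hZev2 : ∀ᶠ t in atTop, Z t ≤ q * (L + ε) + ε * Θ' + ε := by
      filter_upwards [hev2, eventually_ge_atTop T'] with t h2 hT
      rw [hZdef]
      refine Finset.sup'_le _ _ (fun i _ => ?_)
      have h3 := hGron i t hT
      have h4 := h2 i
      rw [div_le_iff₀ (hdv i)]
      have h5 : (Γt i * (L + ε) + ε * Θ i) / γf i ≤ (q * (L + ε) + ε * Θ') * dv i := by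
        rw [div_le_iff₀ (hγfpos i)]
        have hq' : Γt i * (L + ε) ≤ q * (γf i * dv i) * (L + ε) := by
          have h6 := hqi i
          rw [div_le_iff₀ (mul_pos (hγfpos i) (hdv i))] at h6
          exact mul_le_mul_of_nonneg_right h6 hLε0
        have hθ' : ε * Θ i ≤ ε * (Θ' * (γf i * dv i)) := by
          refine mul_le_mul_of_nonneg_left ?_ hε.le
          have h6 := hΘ'i i
          rwa [div_le_iff₀ (mul_pos (hγfpos i) (hdv i))] at h6
        nlinarith [hq', hθ']
      nlinarith [h3, h4, h5]
    have hfin := Filter.limsup_le_of_le hcobdd hZev2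
    rw [← hLdef] at hfin
    linarith [hfin]
  -- conclude L = 0
  have hLz : L = 0 := by
    by_contra hne
    have hLpos : 0 < L := lt_of_le_of_ne hL0 (Ne.symm hne)
    have hd1 : (0:ℝ) < q + Θ' + 1 := by linarith
    obtain ⟨ε, hεdef⟩ : ∃ ε : ℝ, ε = (1 - q) * L / (2 * (q + Θ' + 1)) := ⟨_, rfl⟩
    have hεpos : 0 < ε := by
      rw [hεdef]
      exact div_pos (mul_pos (by linarith) hLpos) (by linarith)
    have hmain := main ε hεpos
    have h2 : ε * (q + Θ' + 1) = (1 - q) * L / 2 := by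
      rw [hεdef]
      field_simp
    nlinarith [hmain, h2, mul_pos (sub_pos.2 hq1) hLpos]
  -- convergence of Z
  have hZtend : Tendsto Z atTop (nhds 0) := by
    refine tendsto_order.2 ⟨fun a ha => ?_, fun a ha => ?_⟩
    · exact Filter.Eventually.of_forall (fun t => lt_of_lt_of_le ha (hZ0 t))
    · have h1 : Filter.limsup Z atTop < a := by rw [← hLdef, hLz]; exact ha
      exact Filter.eventually_lt_of_limsup_lt h1 hZbdd
  -- squeeze
  have hbound : ∀ t, Finset.univ.sup' Finset.univ_nonempty (fun i => |x i t - y i t|)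
      ≤ (Finset.univ.sup' Finset.univ_nonempty (fun i => aU i * dv i)) * Z t := by
    intro t
    refine Finset.sup'_le _ _ (fun i _ => ?_)
    have h1 := (hζxy i t).trans (mul_le_mul_of_nonneg_left (hζZ i t) (haU i).le)
    have h2 : aU i * dv i ≤ Finset.univ.sup' Finset.univ_nonempty (fun i => aU i * dv i) :=
      Finset.le_sup' (f := fun i => aU i * dv i) (Finset.mem_univ i)
    nlinarith [hZ0 t, mul_pos (haU i) (hdv i)]
  refine squeeze_zero (fun t => ?_) hbound ?_
  · exact le_trans (abs_nonneg _)
      (Finset.le_sup' (f := fun i => |x i t - y i t|) (Finset.mem_univ 0))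
  · simpa using hZtend.const_mul
      (Finset.univ.sup' Finset.univ_nonempty (fun i => aU i * dv i))
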